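/- arXiv:1610.00518 — 7 statements merged into one kernel-verified Lean document; each statement's English description precedes it below -/
import Mathlib

section
/- Let c ∈ ℝ^s have pairwise distinct entries and let S1, S2 be s×s real matrices satisfying S1 V1 = (I − S2) V0. Then the extrapolation is exact on polynomials of degree at most s−1: for every real polynomial φ with deg φ ≤ s−1, every Δt > 0 and every n, φ(t_{n,i}) = Σ_{j=1}^s (S1)_{ij} φ(t_{n−1,j}) + Σ_{j=1}^s (S2)_{ij} φ(t_{n,j}) for all i = 1,…,s, where t_{n,i} = nΔt + c_i Δt. -/
/-!
Write `ψ(x) = φ(nΔt + xΔt)`, a polynomial of degree `≤ s - 1`, so the claim is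
`ψ(c_i) = Σ_j (S1)_{ij} ψ(c_j - 1) + Σ_j (S2)_{ij} ψ(c_j)`. With `a` the coefficient vector of `ψ`,
`V0 a` and `V1 a` are the values of `ψ` at the nodes `c_j` and `c_j - 1`, so this is the identity
`S1 V1 = (I - S2) V0` applied to `a`.
-/

open Finset Polynomial Matrix

theorem Matrix.vandermonde_mulVec_coeff {R : Type*} [CommRing R] {s : ℕ} (v : Fin s → R)
    {p : R[X]} (hp : p.natDegree < s) :
    vandermonde v *ᵥ (fun k : Fin s => p.coeff k) = fun i => p.eval (v i) := by
  ext i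
  rw [eval_eq_sum_range' hp, ← Fin.sum_univ_eq_sum_range]
  simp only [mulVec, dotProduct, vandermonde_apply, mul_comm]

theorem Polynomial.eval_eq_sum_of_mul_vandermonde_add {R : Type*} [CommRing R] {s : ℕ}
    {a b : Fin s → R} {A B : Matrix (Fin s) (Fin s) R}
    (h : A * vandermonde b + B * vandermonde a = vandermonde a)
    {p : R[X]} (hp : p.natDegree < s) (i : Fin s) :
    p.eval (a i) = ∑ j, A i j * p.eval (b j) + ∑ j, B i j * p.eval (a j) := by
  have h' := congrArg (· *ᵥ fun k : Fin s => p.coeff k) h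
  simp only [add_mulVec, ← mulVec_mulVec, vandermonde_mulVec_coeff _ hp] at h'
  simpa only [Pi.add_apply, mulVec, dotProduct] using (congrFun h' i).symm

theorem Polynomial.natDegree_comp_linear_le {R : Type*} [CommRing R] (p : R[X]) (α β : R) :
    (p.comp (C α * X + C β)).natDegree ≤ p.natDegree :=
  natDegree_comp_le.trans <| by
    simpa using Nat.mul_le_mul_left p.natDegree (natDegree_linear_le (a := α) (b := β))

theorem stmt_4_general (s : ℕ)
    (c : Fin s → ℝ)
    (S1 S2 V0 V1 : Matrix (Fin s) (Fin s) ℝ)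
    (hV0 : ∀ i j, V0 i j = c i ^ (j : ℕ))
    (hV1 : ∀ i j, V1 i j = (c i - 1) ^ (j : ℕ))
    (hext : S1 * V1 = (1 - S2) * V0) :
    ∀ φ : Polynomial ℝ, φ.natDegree ≤ s - 1 → ∀ Δt : ℝ, 0 < Δt → ∀ n : ℕ, ∀ i : Fin s,
      φ.eval ((n : ℝ) * Δt + c i * Δt) =
        (∑ j, S1 i j * φ.eval ((n : ℝ) * Δt - Δt + c j * Δt)) +
          ∑ j, S2 i j * φ.eval ((n : ℝ) * Δt + c j * Δt) := by
  intro φ hφ Δt _ n i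
  have hV0c : V0 = vandermonde c := Matrix.ext hV0
  have hV1c : V1 = vandermonde (fun j => c j - 1) := Matrix.ext hV1
  have hvdm : S1 * V1 + S2 * V0 = V0 := by
    rw [hext, sub_mul, one_mul, sub_add_cancel]
  rw [hV0c, hV1c] at hvdm
  set ψ := φ.comp (C Δt * X + C ((n : ℝ) * Δt))
  have hψ : ψ.natDegree < s :=
    (natDegree_comp_linear_le φ _ _).trans_lt (by have := i.pos; omega)
  have hψ_eval : ∀ x, ψ.eval x = φ.eval (n * Δt + x * Δt) := fun x => by
    simp only [ψ, eval_comp, eval_add, eval_mul, eval_C, eval_X]; congr 1; ring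
  have hshift : ∀ j, (n : ℝ) * Δt - Δt + c j * Δt = n * Δt + (c j - 1) * Δt := fun j => by ring
  simpa only [hshift, hψ_eval] using eval_eq_sum_of_mul_vandermonde_add hvdm hψ i

/-- If `S1 V1 = (I - S2) V0`, then the extrapolation is exact on polynomials
of degree at most `s-1`. -/
theorem stmt_4 (s : ℕ) (hs : 1 ≤ s)
    (c : Fin s → ℝ) (hc : Function.Injective c)
    (S1 S2 V0 V1 : Matrix (Fin s) (Fin s) ℝ)
    (hV0 : ∀ i j, V0 i j = c i ^ (j : ℕ))
    (hV1 : ∀ i j, V1 i j = (c i - 1) ^ (j : ℕ))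
    (hext : S1 * V1 = (1 - S2) * V0) :
    ∀ φ : Polynomial ℝ, φ.natDegree ≤ s - 1 → ∀ Δt : ℝ, 0 < Δt → ∀ n : ℕ, ∀ i : Fin s,
      φ.eval ((n : ℝ) * Δt + c i * Δt) =
        (∑ j, S1 i j * φ.eval ((n : ℝ) * Δt - Δt + c j * Δt)) +
          ∑ j, S2 i j * φ.eval ((n : ℝ) * Δt + c j * Δt) :=
  stmt_4_general s c S1 S2 V0 V1 hV0 hV1 hext
end

section
/- Let c ∈ ℝ^s have pairwise distinct entries, let P, R be s×s real matrices with P e = e and C V0 − P (C − I) V1 − R V0 D = 0, and let S1, S2 be s×s real matrices with S1 V1 = (I − S2) V0. Set Q̂ = R S1 and R̂ = R S2. Then the explicit Peer method obtained by extrapolation has stage order s: for every real polynomial u of degree at most s, every Δt > 0 and every n, the residual with components (r̂_n)_i = u(t_{n,i}) − Σ_j P_{ij} u(t_{n−1,j}) − Δt Σ_j Q̂_{ij} u'(t_{n−1,j}) − Δt Σ_j R̂_{ij} u'(t_{n,j}) vanishes identically. -/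
open Finset

/-- If the implicit Peer method `(c,P,R)` has stage order `s` (with `P e = e`)
and the extrapolation matrices satisfy `S1 V1 = (I - S2) V0`, then the explicit Peer method
with `Q̂ = R S1`, `R̂ = R S2` has stage order `s`: its residual vanishes identically on
polynomials of degree at most `s`. -/
theorem stmt_7 (s : ℕ) (hs : 1 ≤ s)
    (c : Fin s → ℝ) (hc : Function.Injective c) (hcs : c ⟨s - 1, by omega⟩ = 1)
    (P R S1 S2 Qh Rh V0 V1 C D : Matrix (Fin s) (Fin s) ℝ)
    (hV0 : ∀ i j, V0 i j = c i ^ (j : ℕ))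
    (hV1 : ∀ i j, V1 i j = (c i - 1) ^ (j : ℕ))
    (hC : C = Matrix.diagonal c)
    (hD : D = Matrix.diagonal fun j : Fin s => ((j : ℕ) + 1 : ℝ))
    (hPe : ∀ i : Fin s, ∑ j, P i j = 1)
    (hso : C * V0 - P * (C - 1) * V1 - R * V0 * D = 0)
    (hext : S1 * V1 = (1 - S2) * V0)
    (hQ : Qh = R * S1) (hRh : Rh = R * S2) :
    ∀ u : Polynomial ℝ, u.natDegree ≤ s → ∀ Δt : ℝ, 0 < Δt → ∀ n : ℕ, ∀ i : Fin s,
      u.eval ((n : ℝ) * Δt + c i * Δt)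
        - (∑ j, P i j * u.eval ((n : ℝ) * Δt - Δt + c j * Δt))
        - Δt * (∑ j, Qh i j * (Polynomial.derivative u).eval ((n : ℝ) * Δt - Δt + c j * Δt))
        - Δt * (∑ j, Rh i j * (Polynomial.derivative u).eval ((n : ℝ) * Δt + c j * Δt)) = 0 := by
  -- Key scalar identity: the explicit method is exact on monomials x^k, k ≤ s,
  -- in the scaled variable.
  have hkey : ∀ i : Fin s, ∀ k : ℕ, k ≤ s →
      c i ^ k - (∑ j, P i j * (c j - 1) ^ k)
        - (k : ℝ) * (∑ j, Qh i j * (c j - 1) ^ (k - 1))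
        - (k : ℝ) * (∑ j, Rh i j * c j ^ (k - 1)) = 0 := by
    intro i k hk
    rcases k with _ | m
    · simp [hPe i]
    · have hm : m < s := by omega
      set jm : Fin s := ⟨m, hm⟩ with hjm
      have hjmv : (jm : ℕ) = m := rfl
      -- stage order condition, entry (i, jm)
      have h1 := congrFun (congrFun hso i) jm
      have hCV0 : (C * V0) i jm = c i ^ (m + 1) := by
        rw [hC, Matrix.diagonal_mul, hV0, hjmv, pow_succ]; ring
      have hPCV1 : (P * (C - 1) * V1) i jm = ∑ l, P i l * (c l - 1) ^ (m + 1) := by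
        rw [Matrix.mul_apply]
        apply Finset.sum_congr rfl
        intro l _
        have : (P * (C - 1)) i l = P i l * (c l - 1) := by
          have : C - 1 = Matrix.diagonal (fun x => c x - 1) := by
            rw [hC, ← Matrix.diagonal_one, Matrix.diagonal_sub]
          rw [this, Matrix.mul_diagonal]
        rw [this, hV1, hjmv, pow_succ]; ring
      have hRV0D : (R * V0 * D) i jm = (∑ l, R i l * c l ^ m) * ((m : ℝ) + 1) := by
        rw [hD, Matrix.mul_diagonal, Matrix.mul_apply, hjmv]
        congr 1
        apply Finset.sum_congr rfl
        intro l _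
        rw [hV0, hjmv]
      rw [Matrix.sub_apply, Matrix.sub_apply, Matrix.zero_apply, hCV0, hPCV1, hRV0D] at h1
      -- extrapolation condition multiplied by R, entry (i, jm)
      have h2 := congrFun (congrFun (congrArg (fun M => R * M) hext) i) jm
      change (R * (S1 * V1)) i jm = (R * ((1 - S2) * V0)) i jm at h2
      have hL : (R * (S1 * V1)) i jm = ∑ l, Qh i l * (c l - 1) ^ m := by
        rw [← Matrix.mul_assoc, ← hQ, Matrix.mul_apply]
        apply Finset.sum_congr rfl
        intro l _
        rw [hV1, hjmv]
      have hR2 : (R * ((1 - S2) * V0)) i jm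
          = (∑ l, R i l * c l ^ m) - (∑ l, Rh i l * c l ^ m) := by
        rw [← Matrix.mul_assoc, Matrix.mul_sub, Matrix.mul_one, ← hRh,
          Matrix.sub_mul, Matrix.sub_apply, Matrix.mul_apply, Matrix.mul_apply]
        congr 1 <;> (apply Finset.sum_congr rfl; intro l _; rw [hV0, hjmv])
      rw [hL, hR2] at h2
      have hsub : (m + 1 : ℕ) - 1 = m := rfl
      rw [hsub]
      push_cast
      linear_combination h1 - ((m : ℝ) + 1) * h2
  intro u hu Δt hΔt n i
  set t : ℝ := (n : ℝ) * Δt with ht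
  set v : Polynomial ℝ := Polynomial.taylor t u with hv
  set a : ℕ → ℝ := fun k => v.coeff k with ha
  have hvdeg : v.natDegree < s + 1 := by
    rw [hv, Polynomial.natDegree_taylor]; omega
  have hveval : ∀ x : ℝ, v.eval x = u.eval (x + t) := by
    intro x
    rw [hv, Polynomial.taylor_apply, Polynomial.eval_comp]
    simp
  have h_eval : ∀ x : ℝ, u.eval (t + x) = ∑ k ∈ range (s + 1), a k * x ^ k := by
    intro x
    rw [← Polynomial.eval_eq_sum_range' hvdeg x, hveval, add_comm]
  have hdv : Polynomial.derivative v = (Polynomial.derivative u).comp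
      (Polynomial.X + Polynomial.C t) := by
    rw [hv, Polynomial.taylor_apply, Polynomial.derivative_comp]
    simp
  have h_eval' : ∀ x : ℝ, (Polynomial.derivative u).eval (t + x)
      = ∑ k ∈ range (s + 1), a k * ((k : ℝ) * x ^ (k - 1)) := by
    intro x
    have hdeg' : (Polynomial.derivative v).natDegree < s + 1 :=
      lt_of_le_of_lt (le_trans (Polynomial.natDegree_derivative_le v) (Nat.sub_le _ _)) hvdeg
    have h1 : (Polynomial.derivative u).eval (t + x) = (Polynomial.derivative v).eval x := by
      rw [hdv, Polynomial.eval_comp]; simp [add_comm]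
    rw [h1, Polynomial.eval_eq_sum_range' hdeg' x]
    rw [Finset.sum_range_succ' (fun k => a k * ((k : ℝ) * x ^ (k - 1))) s]
    rw [Finset.sum_range_succ]
    have hatop : v.coeff (s + 1) = 0 :=
      Polynomial.coeff_eq_zero_of_natDegree_lt (by omega)
    have htop : (Polynomial.derivative v).coeff s * x ^ s = 0 := by
      rw [Polynomial.coeff_derivative, hatop]; ring
    rw [htop, add_zero]
    simp only [Nat.cast_zero, zero_mul, mul_zero, add_zero]
    apply Finset.sum_congr rfl
    intro k _
    rw [Polynomial.coeff_derivative]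
    have : (k + 1 : ℕ) - 1 = k := rfl
    rw [this]
    push_cast
    ring
  have harg1 : (n : ℝ) * Δt + c i * Δt = t + c i * Δt := by rw [ht]
  have harg2 : ∀ j, (n : ℝ) * Δt - Δt + c j * Δt = t + (c j - 1) * Δt := by
    intro j; rw [ht]; ring
  have harg3 : ∀ j : Fin s, (n : ℝ) * Δt + c j * Δt = t + c j * Δt := by
    intro j; rw [ht]
  rw [harg1]
  simp only [show ∀ j : Fin s, t - Δt + c j * Δt = t + (c j - 1) * Δt from fun j => by ring,
    harg2, harg3, h_eval, h_eval']
  -- rewrite each piece as a sum over k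
  have E1 : (∑ k ∈ range (s + 1), a k * (c i * Δt) ^ k)
      = ∑ k ∈ range (s + 1), a k * Δt ^ k * c i ^ k := by
    apply Finset.sum_congr rfl; intro k _; rw [mul_pow]; ring
  have E2 : (∑ j, P i j * ∑ k ∈ range (s + 1), a k * ((c j - 1) * Δt) ^ k)
      = ∑ k ∈ range (s + 1), a k * Δt ^ k * (∑ j, P i j * (c j - 1) ^ k) := by
    simp only [Finset.mul_sum]
    rw [Finset.sum_comm]
    apply Finset.sum_congr rfl; intro k _
    apply Finset.sum_congr rfl; intro j _
    rw [mul_pow]; ring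
  have hpow : ∀ (y : ℝ) (k : ℕ), Δt * ((k : ℝ) * (y * Δt) ^ (k - 1))
      = Δt ^ k * ((k : ℝ) * y ^ (k - 1)) := by
    intro y k
    rcases k with _ | m
    · simp
    · have : (m + 1 : ℕ) - 1 = m := rfl
      rw [this, mul_pow, pow_succ]
      push_cast; ring
  have E3 : Δt * (∑ j, Qh i j * ∑ k ∈ range (s + 1), a k * ((k : ℝ) * ((c j - 1) * Δt) ^ (k - 1)))
      = ∑ k ∈ range (s + 1), a k * Δt ^ k * ((k : ℝ) * ∑ j, Qh i j * (c j - 1) ^ (k - 1)) := by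
    rw [Finset.mul_sum]
    simp only [Finset.mul_sum]
    rw [Finset.sum_comm]
    apply Finset.sum_congr rfl; intro k _
    apply Finset.sum_congr rfl; intro j _
    have := hpow (c j - 1) k
    calc Δt * (Qh i j * (a k * ((k : ℝ) * ((c j - 1) * Δt) ^ (k - 1))))
        = Qh i j * a k * (Δt * ((k : ℝ) * ((c j - 1) * Δt) ^ (k - 1))) := by ring
      _ = Qh i j * a k * (Δt ^ k * ((k : ℝ) * (c j - 1) ^ (k - 1))) := by rw [this]
      _ = a k * Δt ^ k * ((k : ℝ) * (Qh i j * (c j - 1) ^ (k - 1))) := by ring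
  have E4 : Δt * (∑ j, Rh i j * ∑ k ∈ range (s + 1), a k * ((k : ℝ) * (c j * Δt) ^ (k - 1)))
      = ∑ k ∈ range (s + 1), a k * Δt ^ k * ((k : ℝ) * ∑ j, Rh i j * c j ^ (k - 1)) := by
    rw [Finset.mul_sum]
    simp only [Finset.mul_sum]
    rw [Finset.sum_comm]
    apply Finset.sum_congr rfl; intro k _
    apply Finset.sum_congr rfl; intro j _
    have := hpow (c j) k
    calc Δt * (Rh i j * (a k * ((k : ℝ) * (c j * Δt) ^ (k - 1))))
        = Rh i j * a k * (Δt * ((k : ℝ) * (c j * Δt) ^ (k - 1))) := by ring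
      _ = Rh i j * a k * (Δt ^ k * ((k : ℝ) * c j ^ (k - 1))) := by rw [this]
      _ = a k * Δt ^ k * ((k : ℝ) * (Rh i j * c j ^ (k - 1))) := by ring
  rw [E1, E2, E3, E4, ← Finset.sum_sub_distrib, ← Finset.sum_sub_distrib,
    ← Finset.sum_sub_distrib]
  apply Finset.sum_eq_zero
  intro k hk
  have hks : k ≤ s := by
    have := Finset.mem_range.mp hk; omega
  linear_combination (a k * Δt ^ k) * hkey i k hks
end

section
/- Let P, R, S1, S2 be s×s real matrices, set Q̂ = R S1 and R̂ = R S2, let F0, F1 : ℝ^m → ℝ^m, and let u : ℝ → ℝ^m be differentiable with u'(t) = F0(u(t)) + F1(u(t)). Then for every Δt > 0 and n, the residual of the IMEX-Peer scheme, with components (r_n)_i = u(t_{n,i}) − Σ_j P_{ij} u(t_{n−1,j}) − Δt Σ_j Q̂_{ij} F0(u(t_{n−1,j})) − Δt Σ_j R̂_{ij} F0(u(t_{n,j})) − Δt Σ_j R_{ij} F1(u(t_{n,j})), satisfies the exact decomposition r_n = r_n^{im} + Δt R δ_n, where r_n^{im} is the residual of the implicit Peer method (P, R) applied with the full right-hand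 side F = F0 + F1, i.e. (r_n^{im})_i = u(t_{n,i}) − Σ_j P_{ij} u(t_{n−1,j}) − Δt Σ_j R_{ij} u'(t_{n,j}), and δ_n is the extrapolation error of φ(t) = F0(u(t)), i.e. (δ_n)_i = φ(t_{n,i}) − Σ_j (S1)_{ij} φ(t_{n−1,j}) − Σ_j (S2)_{ij} φ(t_{n,j}). -/
section MatrixSmul

variable {ι 𝕜 E : Type*} [Fintype ι] [CommRing 𝕜] [AddCommGroup E] [Module 𝕜 E]

theorem Matrix.sum_mul_apply_smul (A B : Matrix ι ι 𝕜) (x : ι → E) (i : ι) :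
    ∑ j, (A * B) i j • x j = ∑ k, A i k • ∑ j, B k j • x j := by
  simp only [Matrix.mul_apply, Finset.sum_smul, Finset.smul_sum, smul_smul]
  exact Finset.sum_comm

/-- `U`, `Φ`, `G` are the stage values of the solution and of the two right-hand sides; primed
quantities belong to the previous step. -/
theorem imexPeer_residual_eq (P R S1 S2 : Matrix ι ι 𝕜) (Δt : 𝕜)
    (U U' Φ Φ' G : ι → E) (i : ι) :
    U i - ∑ j, P i j • U' j - Δt • ∑ j, (R * S1) i j • Φ' j
        - Δt • ∑ j, (R * S2) i j • Φ j - Δt • ∑ j, R i j • G j =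
      (U i - ∑ j, P i j • U' j - Δt • ∑ j, R i j • (Φ j + G j))
        + Δt • ∑ j, R i j • (Φ j - ∑ k, S1 j k • Φ' k - ∑ k, S2 j k • Φ k) := by
  simp only [Matrix.sum_mul_apply_smul, smul_add, smul_sub, Finset.sum_add_distrib,
    Finset.sum_sub_distrib]
  abel

end MatrixSmul

theorem stmt_8_general (s m : ℕ)
    (P R S1 S2 Qh Rh : Matrix (Fin s) (Fin s) ℝ)
    (hQ : Qh = R * S1) (hRh : Rh = R * S2)
    (F0 F1 : EuclideanSpace ℝ (Fin m) → EuclideanSpace ℝ (Fin m))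
    (u : ℝ → EuclideanSpace ℝ (Fin m))
    (hode : ∀ t, deriv u t = F0 (u t) + F1 (u t))
    (c : Fin s → ℝ) (Δt : ℝ)
    (tn : ℝ)
    (r rim δ : Fin s → EuclideanSpace ℝ (Fin m))
    (hr : ∀ i, r i = u (tn + c i * Δt)
      - (∑ j, P i j • u (tn - Δt + c j * Δt))
      - Δt • (∑ j, Qh i j • F0 (u (tn - Δt + c j * Δt)))
      - Δt • (∑ j, Rh i j • F0 (u (tn + c j * Δt)))
      - Δt • (∑ j, R i j • F1 (u (tn + c j * Δt))))
    (hrim : ∀ i, rim i = u (tn + c i * Δt)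
      - (∑ j, P i j • u (tn - Δt + c j * Δt))
      - Δt • (∑ j, R i j • deriv u (tn + c j * Δt)))
    (hδ : ∀ i, δ i = F0 (u (tn + c i * Δt))
      - (∑ j, S1 i j • F0 (u (tn - Δt + c j * Δt)))
      - ∑ j, S2 i j • F0 (u (tn + c j * Δt))) :
    ∀ i, r i = rim i + Δt • ∑ j, R i j • δ j := by
  intro i
  simp only [hr, hrim, hδ, hode, hQ, hRh]
  exact imexPeer_residual_eq P R S1 S2 Δt (fun j => u (tn + c j * Δt))
    (fun j => u (tn - Δt + c j * Δt)) (fun j => F0 (u (tn + c j * Δt)))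
    (fun j => F0 (u (tn - Δt + c j * Δt))) (fun j => F1 (u (tn + c j * Δt))) i

/-- Exact decomposition of the IMEX-Peer residual:
`r_n = r_n^{im} + Δt R δ_n`, where `r_n^{im}` is the residual of the implicit Peer method
with `F = F0 + F1` and `δ_n` is the extrapolation error of `φ = F0 ∘ u`. -/
theorem stmt_8 (s m : ℕ)
    (P R S1 S2 Qh Rh : Matrix (Fin s) (Fin s) ℝ)
    (hQ : Qh = R * S1) (hRh : Rh = R * S2)
    (F0 F1 : EuclideanSpace ℝ (Fin m) → EuclideanSpace ℝ (Fin m))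
    (u : ℝ → EuclideanSpace ℝ (Fin m)) (hu : Differentiable ℝ u)
    (hode : ∀ t, deriv u t = F0 (u t) + F1 (u t))
    (c : Fin s → ℝ) (Δt : ℝ) (hΔt : 0 < Δt) (n : ℕ)
    (tn : ℝ) (htn : tn = (n : ℝ) * Δt)
    (r rim δ : Fin s → EuclideanSpace ℝ (Fin m))
    (hr : ∀ i, r i = u (tn + c i * Δt)
      - (∑ j, P i j • u (tn - Δt + c j * Δt))
      - Δt • (∑ j, Qh i j • F0 (u (tn - Δt + c j * Δt)))
      - Δt • (∑ j, Rh i j • F0 (u (tn + c j * Δt)))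
      - Δt • (∑ j, R i j • F1 (u (tn + c j * Δt))))
    (hrim : ∀ i, rim i = u (tn + c i * Δt)
      - (∑ j, P i j • u (tn - Δt + c j * Δt))
      - Δt • (∑ j, R i j • deriv u (tn + c j * Δt)))
    (hδ : ∀ i, δ i = F0 (u (tn + c i * Δt))
      - (∑ j, S1 i j • F0 (u (tn - Δt + c j * Δt)))
      - ∑ j, S2 i j • F0 (u (tn + c j * Δt))) :
    ∀ i, r i = rim i + Δt • ∑ j, R i j • δ j :=
  stmt_8_general s m P R S1 S2 Qh Rh hQ hRh F0 F1 u hode c Δt tn r rim δ hr hrim hδ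
end

section
/- Let c ∈ ℝ^s have pairwise distinct entries with 0 < c_i ≤ 1, let P, R be s×s real matrices satisfying P e = e and C V0 − P (C − I) V1 − R V0 D = 0, and let u : [a, b] → ℝ^m be (s+1) times continuously differentiable with ‖u^{(s+1)}(t)‖ ≤ M on [a, b]. Then there is a constant K, depending only on c, P, R and s, such that the implicit Peer residual with components (r_n)_i = u(t_{n,i}) − Σ_j P_{ij} u(t_{n−1,j}) − Δt Σ_j R_{ij} u'(t_{n,j}) satisfies max_i ‖(r_n)_i‖ ≤ K M Δt^{s+1}, for all Δt > 0 and n such that all times t_{n−1,j}, t_{n,j} lie in [a, b]. -/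
open Finset
open scoped Nat

section Aux
open Set

theorem taylor_two_sided_aux9 {E : Type*} [NormedAddCommGroup E] [NormedSpace ℝ E]
    {f : ℝ → E} {a b C x x₀ : ℝ} {n : ℕ} (hab : a < b)
    (hf : ContDiffOn ℝ (n + 1) f (Icc a b)) (hx₀ : x₀ ∈ Icc a b) (hx : x ∈ Icc a b)
    (hC : ∀ y ∈ Icc a b, ‖iteratedDerivWithin (n + 1) f (Icc a b) y‖ ≤ C) :
    ‖f x - taylorWithinEval f n (Icc a b) x₀ x‖ ≤ C * |x - x₀| ^ (n + 1) / n ! := by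
  have hC0 : 0 ≤ C := le_trans (norm_nonneg _) (hC x₀ hx₀)
  have hf' : DifferentiableOn ℝ (iteratedDerivWithin n f (Icc a b)) (Icc a b) :=
    hf.differentiableOn_iteratedDerivWithin (mod_cast n.lt_succ_self) (uniqueDiffOn_Icc hab)
  have hd : ∀ t ∈ Icc a b, HasDerivWithinAt (fun y => taylorWithinEval f n (Icc a b) y x)
      (((n ! : ℝ)⁻¹ * (x - t) ^ n) • iteratedDerivWithin (n + 1) f (Icc a b) t) (Icc a b) t :=
    fun t ht => hasDerivWithinAt_taylorWithinEval_at_Icc x hab ht hf.of_succ hf'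
  rcases le_total x₀ x with h | h
  · have hsub : Icc x₀ x ⊆ Icc a b := Icc_subset_Icc hx₀.1 hx.2
    have key := norm_image_sub_le_of_norm_deriv_le_segment'
      (f := fun y => taylorWithinEval f n (Icc a b) y x)
      (f' := fun t => ((n ! : ℝ)⁻¹ * (x - t) ^ n) • iteratedDerivWithin (n + 1) f (Icc a b) t)
      (C := (n ! : ℝ)⁻¹ * |x - x₀| ^ n * C)
      (fun t ht => (hd t (hsub ht)).mono hsub)
      (fun t ht => by
        rw [norm_smul, Real.norm_eq_abs, abs_mul, abs_pow, abs_inv, Nat.abs_cast]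
        have h1 : |x - t| ≤ |x - x₀| := by
          rw [abs_of_nonneg (sub_nonneg.2 ht.2.le), abs_of_nonneg (sub_nonneg.2 h)]
          linarith [ht.1]
        gcongr
        exact hC t (hsub (Ico_subset_Icc_self ht)))
      x (right_mem_Icc.2 h)
    simp only [taylorWithinEval_self] at key
    refine key.trans_eq ?_
    rw [abs_of_nonneg (sub_nonneg.2 h)]
    field_simp
    ring
  · have hsub : Icc x x₀ ⊆ Icc a b := Icc_subset_Icc hx.1 hx₀.2
    have key := norm_image_sub_le_of_norm_deriv_le_segment'
      (f := fun y => taylorWithinEval f n (Icc a b) y x)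
      (f' := fun t => ((n ! : ℝ)⁻¹ * (x - t) ^ n) • iteratedDerivWithin (n + 1) f (Icc a b) t)
      (C := (n ! : ℝ)⁻¹ * |x - x₀| ^ n * C)
      (fun t ht => (hd t (hsub ht)).mono hsub)
      (fun t ht => by
        rw [norm_smul, Real.norm_eq_abs, abs_mul, abs_pow, abs_inv, Nat.abs_cast]
        have h1 : |x - t| ≤ |x - x₀| := by
          rw [abs_of_nonpos (by linarith [ht.1] : x - t ≤ 0),
            abs_of_nonpos (by linarith : x - x₀ ≤ 0)]
          linarith [ht.2.le]
        gcongr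
        exact hC t (hsub (Ico_subset_Icc_self ht)))
      x₀ (right_mem_Icc.2 h)
    simp only [taylorWithinEval_self] at key; rw [norm_sub_rev] at key
    refine key.trans_eq ?_
    rw [abs_of_nonpos (by linarith : x - x₀ ≤ 0)]
    field_simp
    ring

end Aux

set_option maxHeartbeats 1000000 in
theorem stmt_9_aux (k : ℕ)
    (c : Fin (k+1) → ℝ) (hc : Function.Injective c) (hc01 : ∀ i, 0 < c i ∧ c i ≤ 1)
    (P R V0 V1 C D : Matrix (Fin (k+1)) (Fin (k+1)) ℝ)
    (hV0 : ∀ i j, V0 i j = c i ^ (j : ℕ))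
    (hV1 : ∀ i j, V1 i j = (c i - 1) ^ (j : ℕ))
    (hC : C = Matrix.diagonal c)
    (hD : D = Matrix.diagonal fun j : Fin (k+1) => ((j : ℕ) + 1 : ℝ))
    (hPe : ∀ i : Fin (k+1), ∑ j, P i j = 1)
    (hso : C * V0 - P * (C - 1) * V1 - R * V0 * D = 0) :
    ∃ K : ℝ, ∀ (m : ℕ) (u : ℝ → EuclideanSpace ℝ (Fin m)) (a b M : ℝ), a < b →
      ContDiffOn ℝ (((k+1 : ℕ) : ℕ∞) + 1) u (Set.Icc a b) →
      (∀ t ∈ Set.Icc a b, ‖iteratedDerivWithin ((k+1) + 1) u (Set.Icc a b) t‖ ≤ M) →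
      ∀ Δt : ℝ, 0 < Δt → ∀ n : ℕ,
        (∀ j : Fin (k+1), ((n : ℝ) * Δt - Δt + c j * Δt) ∈ Set.Icc a b ∧
          ((n : ℝ) * Δt + c j * Δt) ∈ Set.Icc a b) →
        ∀ i : Fin (k+1),
          ‖u ((n : ℝ) * Δt + c i * Δt)
              - (∑ j, P i j • u ((n : ℝ) * Δt - Δt + c j * Δt))
              - Δt • (∑ j, R i j •
                  derivWithin u (Set.Icc a b) ((n : ℝ) * Δt + c j * Δt))‖
            ≤ K * M * Δt ^ ((k+1) + 1) := by
  classical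
  -- order conditions
  have horder : ∀ (i q : Fin (k+1)), c i ^ ((q:ℕ)+1) =
      (∑ j, P i j * (c j - 1)^((q:ℕ)+1)) + (((q:ℕ):ℝ)+1) * ∑ j, R i j * c j ^ (q:ℕ) := by
    intro i q
    have h0 := congrFun (congrFun hso i) q
    subst hC hD
    have hC1 : (Matrix.diagonal c - 1 : Matrix (Fin (k+1)) (Fin (k+1)) ℝ)
        = Matrix.diagonal (fun l => c l - 1) := by
      rw [← Matrix.diagonal_one, Matrix.diagonal_sub]
    rw [hC1] at h0
    simp only [Matrix.sub_apply, Matrix.zero_apply, Matrix.mul_apply, Matrix.diagonal_apply,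
      ite_mul, mul_ite, zero_mul, mul_zero,
      Finset.sum_ite_eq, Finset.sum_ite_eq', Finset.mem_univ, if_true, hV0, hV1] at h0
    simp only [pow_succ] at h0 ⊢
    have e2 : ∑ x, P i x * (c x - 1) * (c x - 1)^(q:ℕ)
        = ∑ j, P i j * ((c j - 1)^(q:ℕ) * (c j - 1)) :=
      Finset.sum_congr rfl fun j _ => by ring
    rw [e2] at h0
    linear_combination h0
  refine ⟨(1 + ∑ i, ∑ j, |P i j|) / (k+1)! + (∑ i, ∑ j, |R i j|) / k !, ?_⟩
  intro m u a b M hab hu hM Δt hΔt n hmem i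
  set S : Set ℝ := Set.Icc a b with hS
  set t0 : ℝ := (n : ℝ) * Δt with ht0def
  set x : Fin (k+1) → ℝ := fun j => (n : ℝ) * Δt + c j * Δt with hxdef
  set y : Fin (k+1) → ℝ := fun j => (n : ℝ) * Δt - Δt + c j * Δt with hydef
  have hud : UniqueDiffOn ℝ S := uniqueDiffOn_Icc hab
  have hxmem : ∀ j, x j ∈ S := fun j => (hmem j).2
  have hymem : ∀ j, y j ∈ S := fun j => (hmem j).1
  have ht0 : t0 ∈ S := by
    have h1 : a ≤ (n : ℝ) * Δt - Δt + c i * Δt := (hymem i).1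
    have h2 : (n : ℝ) * Δt + c i * Δt ≤ b := (hxmem i).2
    constructor
    · show a ≤ (n : ℝ) * Δt
      nlinarith [(hc01 i).1, (hc01 i).2]
    · show (n : ℝ) * Δt ≤ b
      nlinarith [(hc01 i).1]
  have hM0 : 0 ≤ M := le_trans (norm_nonneg _) (hM t0 ht0)
  have hg : ContDiffOn ℝ ((k : ℕ∞) + 1) (derivWithin u S) S :=
    hu.derivWithin hud (by norm_cast)
  have hMg : ∀ t ∈ S, ‖iteratedDerivWithin (k + 1) (derivWithin u S) S t‖ ≤ M := by
    intro t ht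
    rw [← iteratedDerivWithin_succ']
    exact hM t ht
  have hT : ∀ z : ℝ, taylorWithinEval u (k+1) S t0 z
      = ∑ p ∈ Finset.range (k+2), ((p ! : ℝ)⁻¹ * (z - t0)^p) • iteratedDerivWithin p u S t0 :=
    fun z => taylor_within_apply u (k+1) S t0 z
  have hG : ∀ z : ℝ, taylorWithinEval (derivWithin u S) k S t0 z
      = ∑ q ∈ Finset.range (k+1),
          ((q ! : ℝ)⁻¹ * (z - t0)^q) • iteratedDerivWithin (q+1) u S t0 := by
    intro z
    rw [taylor_within_apply]
    exact Finset.sum_congr rfl fun q _ => by rw [iteratedDerivWithin_succ']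
  have hxsub : ∀ j, x j - t0 = c j * Δt := fun j => by simp [hxdef, ht0def]
  have hysub : ∀ j, y j - t0 = (c j - 1) * Δt := fun j => by
    simp only [hydef, ht0def]; ring
  -- the algebraic identity
  have hA : taylorWithinEval u (k+1) S t0 (x i)
      - (∑ j, P i j • taylorWithinEval u (k+1) S t0 (y j))
      - Δt • (∑ j, R i j • taylorWithinEval (derivWithin u S) k S t0 (x j)) = 0 := by
    have h1 : taylorWithinEval u (k+1) S t0 (x i)
        = ∑ p ∈ Finset.range (k+2),
            ((p ! : ℝ)⁻¹ * (c i * Δt)^p) • iteratedDerivWithin p u S t0 := by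
      rw [hT]; simp_rw [hxsub]
    have h2 : (∑ j, P i j • taylorWithinEval u (k+1) S t0 (y j))
        = ∑ p ∈ Finset.range (k+2),
            ((p ! : ℝ)⁻¹ * ∑ j, P i j * ((c j - 1) * Δt)^p) • iteratedDerivWithin p u S t0 := by
      simp_rw [hT, hysub, Finset.smul_sum]
      rw [Finset.sum_comm]
      refine Finset.sum_congr rfl fun p _ => ?_
      simp_rw [smul_smul]
      rw [← Finset.sum_smul]
      congr 1
      rw [Finset.mul_sum]
      exact Finset.sum_congr rfl fun j _ => by ring
    have h3 : Δt • (∑ j, R i j • taylorWithinEval (derivWithin u S) k S t0 (x j))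
        = ∑ q ∈ Finset.range (k+1),
            ((q ! : ℝ)⁻¹ * (Δt * ∑ j, R i j * (c j * Δt)^q)) • iteratedDerivWithin (q+1) u S t0 := by
      simp_rw [hG, hxsub, Finset.smul_sum]
      rw [Finset.sum_comm]
      refine Finset.sum_congr rfl fun q _ => ?_
      simp_rw [smul_smul]
      rw [← Finset.sum_smul]
      congr 1
      rw [Finset.mul_sum, Finset.mul_sum]
      exact Finset.sum_congr rfl fun j _ => by ring
    rw [h1, h2, h3, ← Finset.sum_sub_distrib]
    simp_rw [← sub_smul, ← mul_sub]
    rw [Finset.sum_range_succ']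
    have hz0 : (((0:ℕ) ! : ℝ)⁻¹ * ((c i * Δt)^0 - ∑ j, P i j * ((c j - 1) * Δt)^0))
        • iteratedDerivWithin 0 u S t0 = 0 := by
      simp [hPe i]
    rw [hz0, add_zero, ← Finset.sum_sub_distrib]
    refine Finset.sum_eq_zero fun q hq => ?_
    rw [← sub_smul]
    convert zero_smul ℝ (iteratedDerivWithin (q+1) u S t0)
    have hord := horder i ⟨q, Finset.mem_range.1 hq⟩
    simp only [Fin.val_mk] at hord
    have hfac : (((q+1)! : ℕ) : ℝ) = ((q:ℝ)+1) * (q ! : ℝ) := by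
      push_cast [Nat.factorial_succ]; ring
    have hq1 : ((q ! : ℕ) : ℝ) ≠ 0 := Nat.cast_ne_zero.2 (Nat.factorial_ne_zero q)
    have hq2 : ((q:ℝ)+1) ≠ 0 := by positivity
    have e1 : ∑ j, P i j * ((c j - 1) * Δt)^(q+1)
        = (∑ j, P i j * (c j - 1)^(q+1)) * Δt^(q+1) := by
      rw [Finset.sum_mul]
      exact Finset.sum_congr rfl fun j _ => by rw [mul_pow]; ring
    have e2 : ∑ j, R i j * (c j * Δt)^q = (∑ j, R i j * c j ^ q) * Δt^q := by
      rw [Finset.sum_mul]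
      exact Finset.sum_congr rfl fun j _ => by rw [mul_pow]; ring
    rw [mul_pow, e1, e2, hfac, hord]
    field_simp
    ring
  -- the residual splits into Taylor remainders
  have hres : u (x i) - (∑ j, P i j • u (y j)) - Δt • (∑ j, R i j • derivWithin u S (x j))
      = (u (x i) - taylorWithinEval u (k+1) S t0 (x i))
        - (∑ j, P i j • (u (y j) - taylorWithinEval u (k+1) S t0 (y j)))
        - Δt • (∑ j, R i j •
            (derivWithin u S (x j) - taylorWithinEval (derivWithin u S) k S t0 (x j))) := by
    have expand : (u (x i) - taylorWithinEval u (k+1) S t0 (x i))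
        - (∑ j, P i j • (u (y j) - taylorWithinEval u (k+1) S t0 (y j)))
        - Δt • (∑ j, R i j •
            (derivWithin u S (x j) - taylorWithinEval (derivWithin u S) k S t0 (x j)))
        = (u (x i) - (∑ j, P i j • u (y j)) - Δt • (∑ j, R i j • derivWithin u S (x j)))
          - (taylorWithinEval u (k+1) S t0 (x i)
            - (∑ j, P i j • taylorWithinEval u (k+1) S t0 (y j))
            - Δt • (∑ j, R i j • taylorWithinEval (derivWithin u S) k S t0 (x j))) := by
      simp only [smul_sub, Finset.sum_sub_distrib]
      abel
    rw [expand, hA, sub_zero]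
  -- bounds
  have habs_x : ∀ j, |x j - t0| ≤ Δt := by
    intro j
    rw [hxsub j, abs_of_nonneg (le_of_lt (mul_pos (hc01 j).1 hΔt))]
    nlinarith [(hc01 j).1, (hc01 j).2]
  have habs_y : ∀ j, |y j - t0| ≤ Δt := by
    intro j
    rw [hysub j, abs_mul, abs_of_pos hΔt]
    have h1 : |c j - 1| ≤ 1 := by
      rw [abs_le]; constructor <;> nlinarith [(hc01 j).1, (hc01 j).2]
    nlinarith
  have hE1 : ‖u (x i) - taylorWithinEval u (k+1) S t0 (x i)‖ ≤ M * Δt^(k+2) / (k+1)! := by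
    refine (taylor_two_sided_aux9 (n := k+1) hab hu ht0 (hxmem i) hM).trans ?_
    gcongr
    exact habs_x i
  have hE2 : ∀ j, ‖u (y j) - taylorWithinEval u (k+1) S t0 (y j)‖
      ≤ M * Δt^(k+2) / (k+1)! := by
    intro j
    refine (taylor_two_sided_aux9 (n := k+1) hab hu ht0 (hymem j) hM).trans ?_
    gcongr
    exact habs_y j
  have hE3 : ∀ j, ‖derivWithin u S (x j) - taylorWithinEval (derivWithin u S) k S t0 (x j)‖
      ≤ M * Δt^(k+1) / k ! := by
    intro j
    refine (taylor_two_sided_aux9 (n := k) hab hg ht0 (hxmem j) hMg).trans ?_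
    gcongr
    exact habs_x j
  rw [hres]
  have hb2 : ‖∑ j, P i j • (u (y j) - taylorWithinEval u (k+1) S t0 (y j))‖
      ≤ (∑ j, |P i j|) * (M * Δt^(k+2) / (k+1)!) := by
    refine (norm_sum_le _ _).trans ?_
    rw [Finset.sum_mul]
    refine Finset.sum_le_sum fun j _ => ?_
    rw [norm_smul, Real.norm_eq_abs]
    exact mul_le_mul_of_nonneg_left (hE2 j) (abs_nonneg _)
  have hb3 : ‖Δt • (∑ j, R i j •
      (derivWithin u S (x j) - taylorWithinEval (derivWithin u S) k S t0 (x j)))‖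
      ≤ Δt * ((∑ j, |R i j|) * (M * Δt^(k+1) / k !)) := by
    rw [norm_smul, Real.norm_eq_abs, abs_of_pos hΔt]
    refine mul_le_mul_of_nonneg_left ?_ hΔt.le
    refine (norm_sum_le _ _).trans ?_
    rw [Finset.sum_mul]
    refine Finset.sum_le_sum fun j _ => ?_
    rw [norm_smul, Real.norm_eq_abs]
    exact mul_le_mul_of_nonneg_left (hE3 j) (abs_nonneg _)
  have htot := (norm_sub_le _ _).trans (add_le_add ((norm_sub_le _ _).trans
    (add_le_add hE1 hb2)) hb3)
  refine htot.trans ?_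
  have hPle : (∑ j, |P i j|) ≤ ∑ i', ∑ j, |P i' j| :=
    Finset.single_le_sum (f := fun i' => ∑ j, |P i' j|)
      (fun i' _ => Finset.sum_nonneg fun j _ => abs_nonneg _) (Finset.mem_univ i)
  have hRle : (∑ j, |R i j|) ≤ ∑ i', ∑ j, |R i' j| :=
    Finset.single_le_sum (f := fun i' => ∑ j, |R i' j|)
      (fun i' _ => Finset.sum_nonneg fun j _ => abs_nonneg _) (Finset.mem_univ i)
  have h1 : Δt * ((∑ j, |R i j|) * (M * Δt ^ (k + 1) / (k ! : ℝ)))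
      = (∑ j, |R i j|) * (M * Δt ^ (k + 2) / (k ! : ℝ)) := by
    field_simp; ring
  rw [h1]
  have h2 : ((1 + ∑ i', ∑ j, |P i' j|) / ((k + 1)! : ℝ) + (∑ i', ∑ j, |R i' j|) / (k ! : ℝ))
        * M * Δt ^ (k + 1 + 1)
      = M * Δt ^ (k + 2) / ((k + 1)! : ℝ)
        + (∑ i', ∑ j, |P i' j|) * (M * Δt ^ (k + 2) / ((k + 1)! : ℝ))
        + (∑ i', ∑ j, |R i' j|) * (M * Δt ^ (k + 2) / (k ! : ℝ)) := by
    field_simp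
  rw [h2]
  gcongr <;> positivity


/-- For an implicit Peer method with `P e = e` and stage order `s`
(`C V0 - P (C - I) V1 - R V0 D = 0`), and a `C^{s+1}` solution `u` on `[a,b]` with
`‖u^{(s+1)}‖ ≤ M`, the residual is bounded by `K M Δt^{s+1}` with `K` depending only on
`c, P, R, s`. -/
theorem stmt_9 (s : ℕ) (hs : 1 ≤ s)
    (c : Fin s → ℝ) (hc : Function.Injective c) (hc01 : ∀ i, 0 < c i ∧ c i ≤ 1)
    (P R V0 V1 C D : Matrix (Fin s) (Fin s) ℝ)
    (hV0 : ∀ i j, V0 i j = c i ^ (j : ℕ))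
    (hV1 : ∀ i j, V1 i j = (c i - 1) ^ (j : ℕ))
    (hC : C = Matrix.diagonal c)
    (hD : D = Matrix.diagonal fun j : Fin s => ((j : ℕ) + 1 : ℝ))
    (hPe : ∀ i : Fin s, ∑ j, P i j = 1)
    (hso : C * V0 - P * (C - 1) * V1 - R * V0 * D = 0) :
    ∃ K : ℝ, ∀ (m : ℕ) (u : ℝ → EuclideanSpace ℝ (Fin m)) (a b M : ℝ), a < b →
      ContDiffOn ℝ ((s : ℕ∞) + 1) u (Set.Icc a b) →
      (∀ t ∈ Set.Icc a b, ‖iteratedDerivWithin (s + 1) u (Set.Icc a b) t‖ ≤ M) →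
      ∀ Δt : ℝ, 0 < Δt → ∀ n : ℕ,
        (∀ j : Fin s, ((n : ℝ) * Δt - Δt + c j * Δt) ∈ Set.Icc a b ∧
          ((n : ℝ) * Δt + c j * Δt) ∈ Set.Icc a b) →
        ∀ i : Fin s,
          ‖u ((n : ℝ) * Δt + c i * Δt)
              - (∑ j, P i j • u ((n : ℝ) * Δt - Δt + c j * Δt))
              - Δt • (∑ j, R i j •
                  derivWithin u (Set.Icc a b) ((n : ℝ) * Δt + c j * Δt))‖
            ≤ K * M * Δt ^ (s + 1) := by
  obtain ⟨k, rfl⟩ : ∃ k, s = k + 1 := ⟨s - 1, (Nat.succ_pred_eq_of_pos hs).symm⟩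
  exact stmt_9_aux k c hc hc01 P R V0 V1 C D hV0 hV1 hC hD hPe hso
end

section
/- Let c ∈ ℝ^s have pairwise distinct entries, let P, R satisfy P e = e and C V0 − P (C − I) V1 − R V0 D = 0, let S2 be strictly lower triangular and S1 = (I − S2) V0 V1^{−1}, and set Q̂ = R S1, R̂ = R S2. Let u : [a, b] → ℝ^m be such that u is (s+2) times continuously differentiable and t ↦ F0(u(t)) is (s+1) times continuously differentiable, with u' = F0(u) + F1(u). Then the IMEX residual r_n (with components (r_n)_i = u(t_{n,i}) − Σ_j P_{ij} u(t_{n−1,j}) − Δt Σ_j Q̂_{ij} F0(u(t_{n−1,j})) − Δt Σ_j R̂_{ij} F0(u(t_{n,j})) − Δt Σ_j R_{ij} F1(u(t_{n,j}))) satisfies r_n = Δt^{s+1} d_{s+1} ⊗ u^{(s+1)}(t_n) + Δt R E_{ex} + ρ_n with E_{ex} = (Δt^s/s!) ((I−S2)c^s − S1(c−e)^s) ⊗ (d^s/dt^s) F0(u(t_n)) and ‖ρ_n‖ ≤ K Δt^{s+2}, where K depends only on the method coefficients, s, and bounds for u^{(s+2)} and (d^{s+1}/dt^{s+1}) F0(u(t))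 on [a, b], uniformly over all n, Δt with all times t_{n−1,j}, t_{n,j} in [a, b]. -/
open Finset
open scoped Nat

theorem imex_taylor_two_sided {E : Type*} [NormedAddCommGroup E] [NormedSpace ℝ E]
    {f : ℝ → E} {a b C x x₀ : ℝ} {n : ℕ} (hab : a < b)
    (hf : ContDiffOn ℝ (n + 1) f (Set.Icc a b)) (hx : x ∈ Set.Icc a b)
    (hx₀ : x₀ ∈ Set.Icc a b)
    (hC : ∀ y ∈ Set.Icc a b, ‖iteratedDerivWithin (n + 1) f (Set.Icc a b) y‖ ≤ C) :
    ‖f x - taylorWithinEval f n (Set.Icc a b) x₀ x‖ ≤ C * |x - x₀| ^ (n + 1) / n ! := by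
  have hC0 : 0 ≤ C := le_trans (norm_nonneg _) (hC x₀ hx₀)
  have hf' : DifferentiableOn ℝ (iteratedDerivWithin n f (Set.Icc a b)) (Set.Icc a b) :=
    hf.differentiableOn_iteratedDerivWithin (mod_cast n.lt_succ_self) (uniqueDiffOn_Icc hab)
  have hdd : ∀ t ∈ Set.Icc a b,
      HasDerivWithinAt (fun y => taylorWithinEval f n (Set.Icc a b) y x)
        (((n ! : ℝ)⁻¹ * (x - t) ^ n) • iteratedDerivWithin (n + 1) f (Set.Icc a b) t)
        (Set.Icc a b) t :=
    fun t ht => hasDerivWithinAt_taylorWithinEval_at_Icc x hab ht hf.of_succ hf'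
  rcases le_total x₀ x with h | h
  · have hsub : Set.Icc x₀ x ⊆ Set.Icc a b := Set.Icc_subset_Icc hx₀.1 hx.2
    have A : ∀ t ∈ Set.Icc x₀ x,
        HasDerivWithinAt (fun y => taylorWithinEval f n (Set.Icc a b) y x)
          (((n ! : ℝ)⁻¹ * (x - t) ^ n) • iteratedDerivWithin (n + 1) f (Set.Icc a b) t)
          (Set.Icc x₀ x) t := fun t ht => (hdd t (hsub ht)).mono hsub
    have bound : ∀ t ∈ Set.Ico x₀ x,
        ‖((n ! : ℝ)⁻¹ * (x - t) ^ n) • iteratedDerivWithin (n + 1) f (Set.Icc a b) t‖ ≤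
          (n ! : ℝ)⁻¹ * |x - x₀| ^ n * C := by
      intro t ht
      rw [norm_smul, Real.norm_eq_abs, abs_mul, abs_pow, abs_inv, Nat.abs_cast]
      have h1 : |x - t| ≤ |x - x₀| := by
        rw [abs_of_nonneg (by linarith [ht.2.le] : (0:ℝ) ≤ x - t),
          abs_of_nonneg (by linarith : (0:ℝ) ≤ x - x₀)]
        linarith [ht.1]
      have h2 := hC t (hsub (Set.Ico_subset_Icc_self ht))
      have h3 : (n ! : ℝ)⁻¹ * |x - t| ^ n ≤ (n ! : ℝ)⁻¹ * |x - x₀| ^ n := by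
        apply mul_le_mul_of_nonneg_left (pow_le_pow_left₀ (abs_nonneg _) h1 n)
        positivity
      exact mul_le_mul h3 h2 (norm_nonneg _) (by positivity)
    have := norm_image_sub_le_of_norm_deriv_le_segment' A bound x (Set.right_mem_Icc.2 h)
    simp only [taylorWithinEval_self] at this
    refine this.trans_eq ?_
    rw [abs_of_nonneg (by linarith : (0:ℝ) ≤ x - x₀)]
    field_simp
    ring
  · have hsub : Set.Icc x x₀ ⊆ Set.Icc a b := Set.Icc_subset_Icc hx.1 hx₀.2
    have A : ∀ t ∈ Set.Icc x x₀,
        HasDerivWithinAt (fun y => taylorWithinEval f n (Set.Icc a b) y x)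
          (((n ! : ℝ)⁻¹ * (x - t) ^ n) • iteratedDerivWithin (n + 1) f (Set.Icc a b) t)
          (Set.Icc x x₀) t := fun t ht => (hdd t (hsub ht)).mono hsub
    have bound : ∀ t ∈ Set.Ico x x₀,
        ‖((n ! : ℝ)⁻¹ * (x - t) ^ n) • iteratedDerivWithin (n + 1) f (Set.Icc a b) t‖ ≤
          (n ! : ℝ)⁻¹ * |x - x₀| ^ n * C := by
      intro t ht
      rw [norm_smul, Real.norm_eq_abs, abs_mul, abs_pow, abs_inv, Nat.abs_cast]
      have h1 : |x - t| ≤ |x - x₀| := by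
        rw [abs_sub_comm x t, abs_sub_comm x x₀,
          abs_of_nonneg (by linarith [ht.1] : (0:ℝ) ≤ t - x),
          abs_of_nonneg (by linarith : (0:ℝ) ≤ x₀ - x)]
        linarith [ht.2.le]
      have h2 := hC t (hsub (Set.Ico_subset_Icc_self ht))
      have h3 : (n ! : ℝ)⁻¹ * |x - t| ^ n ≤ (n ! : ℝ)⁻¹ * |x - x₀| ^ n := by
        apply mul_le_mul_of_nonneg_left (pow_le_pow_left₀ (abs_nonneg _) h1 n)
        positivity
      exact mul_le_mul h3 h2 (norm_nonneg _) (by positivity)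
    have := norm_image_sub_le_of_norm_deriv_le_segment' A bound x₀ (Set.right_mem_Icc.2 h)
    simp only [taylorWithinEval_self] at this
    rw [norm_sub_rev] at this
    refine this.trans_eq ?_
    rw [abs_sub_comm, abs_of_nonneg (by linarith : (0:ℝ) ≤ x₀ - x)]
    field_simp
    ring

lemma imex_collect {E : Type*} [AddCommGroup E] [Module ℝ E] {s : ℕ} (N : ℕ)
    (p : Fin s → ℝ) (q : Fin s → ℕ → ℝ) (V : ℕ → E) :
    ∑ j, p j • (∑ k ∈ Finset.range N, q j k • V k)
      = ∑ k ∈ Finset.range N, (∑ j, p j * q j k) • V k := by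
  simp_rw [Finset.smul_sum, smul_smul]
  rw [Finset.sum_comm]
  simp_rw [Finset.sum_smul]

lemma imex_sum_shift {E : Type*} [AddCommGroup E] [Module ℝ E] (s : ℕ)
    (α β : ℕ → ℝ) (γ : ℝ) (V : ℕ → E)
    (h0 : α 0 = 0) (hmid : ∀ k, k < s → α (k + 1) = β k) (hlast : α (s + 1) - β s = γ) :
    (∑ k ∈ Finset.range (s + 1 + 1), α k • V k)
      - (∑ k ∈ Finset.range (s + 1), β k • V (k + 1)) - γ • V (s + 1) = 0 := by
  rw [Finset.sum_range_succ' (fun k => α k • V k) (s + 1)]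
  rw [h0, zero_smul, add_zero, ← Finset.sum_sub_distrib]
  simp_rw [← sub_smul]
  rw [Finset.sum_range_succ, hlast]
  rw [Finset.sum_eq_zero (fun k hk => by
    rw [hmid k (Finset.mem_range.1 hk), sub_self, zero_smul])]
  abel

lemma imex_coeff_mid (k : ℕ) (xi Sp Sr Δt : ℝ) (h : xi - Sp - Sr * ((k : ℝ) + 1) = 0) :
    ((k + 1)! : ℝ)⁻¹ * (xi * Δt ^ (k + 1)) - ((k + 1)! : ℝ)⁻¹ * Δt ^ (k + 1) * Sp
      = Δt * ((k ! : ℝ)⁻¹ * Δt ^ k * Sr) := by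
  have h1 : ((k : ℝ) + 1) ≠ 0 := by positivity
  have h2 : (k ! : ℝ) ≠ 0 := Nat.cast_ne_zero.2 k.factorial_ne_zero
  have hf : ((k + 1)! : ℝ) = ((k : ℝ) + 1) * (k ! : ℝ) := by
    rw [Nat.factorial_succ]; push_cast; ring
  have hx : xi = Sp + Sr * ((k : ℝ) + 1) := by linarith
  rw [hx, hf]
  field_simp
  ring

lemma imex_coeff_last (s : ℕ) (xi Sp Sr Δt di : ℝ)
    (hd : di = (1 / ((s + 1)! : ℝ)) * (xi - Sp - ((s : ℝ) + 1) * Sr)) :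
    ((s + 1)! : ℝ)⁻¹ * (xi * Δt ^ (s + 1)) - ((s + 1)! : ℝ)⁻¹ * Δt ^ (s + 1) * Sp
      - Δt * ((s ! : ℝ)⁻¹ * Δt ^ s * Sr) = Δt ^ (s + 1) * di := by
  have h1 : ((s : ℝ) + 1) ≠ 0 := by positivity
  have h2 : (s ! : ℝ) ≠ 0 := Nat.cast_ne_zero.2 s.factorial_ne_zero
  have hf : ((s + 1)! : ℝ) = ((s : ℝ) + 1) * (s ! : ℝ) := by
    rw [Nat.factorial_succ]; push_cast; ring
  rw [hd, hf]
  field_simp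
  ring

lemma imex_norm6 {E : Type*} [SeminormedAddCommGroup E] (v1 v2 v3 v4 v5 v6 : E) :
    ‖v1 - v2 - v3 - v4 - v5 + v6‖ ≤ ‖v1‖ + ‖v2‖ + ‖v3‖ + ‖v4‖ + ‖v5‖ + ‖v6‖ := by
  have h2 : ‖v1 - v2‖ ≤ ‖v1‖ + ‖v2‖ := norm_sub_le _ _
  have h3 : ‖v1 - v2 - v3‖ ≤ ‖v1 - v2‖ + ‖v3‖ := norm_sub_le _ _
  have h4 : ‖v1 - v2 - v3 - v4‖ ≤ ‖v1 - v2 - v3‖ + ‖v4‖ := norm_sub_le _ _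
  have h5 : ‖v1 - v2 - v3 - v4 - v5‖ ≤ ‖v1 - v2 - v3 - v4‖ + ‖v5‖ := norm_sub_le _ _
  have h6 : ‖v1 - v2 - v3 - v4 - v5 + v6‖ ≤ ‖v1 - v2 - v3 - v4 - v5‖ + ‖v6‖ := norm_add_le _ _
  linarith

lemma imex_sum_norm_bound {E : Type*} [SeminormedAddCommGroup E] [Module ℝ E]
    [NormSMulClass ℝ E] {s : ℕ} (p : Fin s → ℝ) (v : Fin s → E) (T Sa : ℝ)
    (hv : ∀ j, ‖v j‖ ≤ T) (hT : 0 ≤ T) (hp : (∑ j, |p j|) ≤ Sa) :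
    ‖∑ j, p j • v j‖ ≤ Sa * T := by
  calc ‖∑ j, p j • v j‖ ≤ ∑ j, ‖p j • v j‖ := norm_sum_le _ _
    _ = ∑ j, |p j| * ‖v j‖ := by simp_rw [norm_smul, Real.norm_eq_abs]
    _ ≤ ∑ j, |p j| * T := Finset.sum_le_sum fun j _ => mul_le_mul_of_nonneg_left (hv j) (abs_nonneg _)
    _ = (∑ j, |p j|) * T := by rw [Finset.sum_mul]
    _ ≤ Sa * T := mul_le_mul_of_nonneg_right hp hT

set_option maxHeartbeats 1000000 in
/-- Asymptotic expansion of the IMEX-Peer residual: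
`r_n = Δt^{s+1} d_{s+1} ⊗ u^{(s+1)}(t_n) + Δt R E_{ex} + ρ_n` with `‖ρ_n‖ ≤ K Δt^{s+2}`,
where `E_{ex} = (Δt^s/s!) ((I-S2)c^s - S1(c-e)^s) ⊗ (d^s/dt^s) F0(u(t_n))` and `K` depends
only on the method coefficients, `s`, and the bounds `M1, M2` for `u^{(s+2)}` and
`(d^{s+1}/dt^{s+1}) F0(u(t))` on `[a,b]`. -/
theorem stmt_10 (s : ℕ) (hs : 1 ≤ s)
    (c : Fin s → ℝ) (hc : Function.Injective c)
    (P R S1 S2 Qh Rh V0 V1 C D : Matrix (Fin s) (Fin s) ℝ)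
    (hV0 : ∀ i j, V0 i j = c i ^ (j : ℕ))
    (hV1 : ∀ i j, V1 i j = (c i - 1) ^ (j : ℕ))
    (hC : C = Matrix.diagonal c)
    (hD : D = Matrix.diagonal fun j : Fin s => ((j : ℕ) + 1 : ℝ))
    (hPe : ∀ i : Fin s, ∑ j, P i j = 1)
    (hso : C * V0 - P * (C - 1) * V1 - R * V0 * D = 0)
    (hS2tri : ∀ i j : Fin s, i ≤ j → S2 i j = 0)
    (hS1 : S1 = (1 - S2) * V0 * V1⁻¹)
    (hQ : Qh = R * S1) (hRh : Rh = R * S2)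
    (d : Fin s → ℝ)
    (hd : ∀ i, d i = (1 / (Nat.factorial (s + 1) : ℝ)) *
      (c i ^ (s + 1) - (∑ k, P i k * (c k - 1) ^ (s + 1))
        - ((s : ℝ) + 1) * ∑ k, R i k * c k ^ s))
    (M1 M2 : ℝ) :
    ∃ K : ℝ, ∀ (m : ℕ)
      (F0 F1 : EuclideanSpace ℝ (Fin m) → EuclideanSpace ℝ (Fin m))
      (u : ℝ → EuclideanSpace ℝ (Fin m)) (a b : ℝ), a < b →
      ContDiffOn ℝ ((s : ℕ∞) + 2) u (Set.Icc a b) →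
      ContDiffOn ℝ ((s : ℕ∞) + 1) (fun t => F0 (u t)) (Set.Icc a b) →
      (∀ t ∈ Set.Icc a b, HasDerivWithinAt u (F0 (u t) + F1 (u t)) (Set.Icc a b) t) →
      (∀ t ∈ Set.Icc a b, ‖iteratedDerivWithin (s + 2) u (Set.Icc a b) t‖ ≤ M1) →
      (∀ t ∈ Set.Icc a b, ‖iteratedDerivWithin (s + 1) (fun t => F0 (u t)) (Set.Icc a b) t‖ ≤ M2) →
      ∀ Δt : ℝ, 0 < Δt → ∀ n : ℕ,
        ((n : ℝ) * Δt ∈ Set.Icc a b) →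
        (∀ j : Fin s, ((n : ℝ) * Δt - Δt + c j * Δt) ∈ Set.Icc a b ∧
          ((n : ℝ) * Δt + c j * Δt) ∈ Set.Icc a b) →
        ∀ i : Fin s,
          ‖(u ((n : ℝ) * Δt + c i * Δt)
              - (∑ j, P i j • u ((n : ℝ) * Δt - Δt + c j * Δt))
              - Δt • (∑ j, Qh i j • F0 (u ((n : ℝ) * Δt - Δt + c j * Δt)))
              - Δt • (∑ j, Rh i j • F0 (u ((n : ℝ) * Δt + c j * Δt)))
              - Δt • (∑ j, R i j • F1 (u ((n : ℝ) * Δt + c j * Δt))))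
            - Δt ^ (s + 1) •
                (d i • iteratedDerivWithin (s + 1) u (Set.Icc a b) ((n : ℝ) * Δt))
            - Δt • (∑ j, R i j • ((Δt ^ s / (Nat.factorial s : ℝ)) •
                (((c j ^ s - ∑ k, S2 j k * c k ^ s) - ∑ k, S1 j k * (c k - 1) ^ s) •
                  iteratedDerivWithin s (fun t => F0 (u t)) (Set.Icc a b) ((n : ℝ) * Δt))))‖
            ≤ K * Δt ^ (s + 2) := by
  classical
  -- Scalar order conditions derived from the matrix hypotheses
  have hV1det : IsUnit V1.det := by
    have hveq : V1 = Matrix.vandermonde (fun i => c i - 1) := by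
      ext i j; rw [hV1, Matrix.vandermonde]; rfl
    rw [hveq, Matrix.det_vandermonde]
    refine isUnit_iff_ne_zero.2 (Finset.prod_ne_zero_iff.2 fun i _ =>
      Finset.prod_ne_zero_iff.2 fun j hj => ?_)
    have hne : c j ≠ c i := fun h => absurd (hc h) (Finset.mem_Ioi.1 hj).ne'
    intro h
    exact hne (by linarith [sub_eq_zero.1 h])
  have hSV : ∀ (l : Fin s) (k : ℕ), k < s →
      (∑ j, S1 l j * (c j - 1) ^ k) = c l ^ k - ∑ j, S2 l j * c j ^ k := by
    have hm : S1 * V1 = V0 - S2 * V0 := by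
      rw [hS1, Matrix.mul_assoc, Matrix.nonsing_inv_mul V1 hV1det, Matrix.mul_one,
        Matrix.sub_mul, Matrix.one_mul]
    intro l k hk
    have h := congrFun (congrFun hm l) ⟨k, hk⟩
    simpa [Matrix.mul_apply, Matrix.sub_apply, hV0, hV1] using h
  have hQE : ∀ i j, Qh i j = ∑ l, R i l * S1 l j := by
    intro i j; rw [hQ, Matrix.mul_apply]
  have hRhE : ∀ i j, Rh i j = ∑ l, R i l * S2 l j := by
    intro i j; rw [hRh, Matrix.mul_apply]
  have hcond : ∀ (i : Fin s) (k : ℕ), k < s →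
      c i ^ (k + 1) - (∑ j, P i j * (c j - 1) ^ (k + 1))
        - ((k : ℝ) + 1) * ∑ j, R i j * c j ^ k = 0 := by
    intro i k hk
    have h : (C * V0 - P * (C - 1) * V1 - R * V0 * D) i ⟨k, hk⟩ = 0 := by rw [hso]; simp
    have hC1 : C - 1 = Matrix.diagonal (fun j => c j - 1) := by
      rw [hC, ← Matrix.diagonal_one, Matrix.diagonal_sub]
    rw [hC1, hC, hD] at h
    simp [Matrix.mul_apply, Matrix.sub_apply, Matrix.diagonal, hV0, hV1,
      Finset.sum_ite_eq, Finset.sum_ite_eq', mul_comm, mul_assoc, mul_left_comm] at h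
    have b1 : ∑ j, P i j * (c j - 1) ^ (k + 1) = ∑ x, P i x * ((c x - 1) * (c x - 1) ^ k) :=
      Finset.sum_congr rfl fun j _ => by ring
    have b2 : ((k : ℝ) + 1) * ∑ j, R i j * c j ^ k = ∑ x, R i x * (c x ^ k * ((k : ℝ) + 1)) := by
      rw [Finset.mul_sum]; exact Finset.sum_congr rfl fun j _ => by ring
    rw [b1, b2]
    linear_combination h
  -- constants
  set M1' : ℝ := max M1 0 with hM1'def
  set M2' : ℝ := max M2 0 with hM2'def
  set A : ℝ := 1 + ∑ j, (|c j| + |c j - 1|) with hAdef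
  set SPa : ℝ := ∑ i, ∑ j, |P i j| with hSPadef
  set SQa : ℝ := ∑ i, ∑ j, |Qh i j| with hSQadef
  set SRha : ℝ := ∑ i, ∑ j, |Rh i j| with hSRhadef
  set SRa : ℝ := ∑ i, ∑ j, |R i j| with hSRadef
  have hM1'0 : (0:ℝ) ≤ M1' := le_max_right _ _
  have hM2'0 : (0:ℝ) ≤ M2' := le_max_right _ _
  have hA1 : ∀ j, |c j| ≤ A := by
    intro j
    have h1 : |c j| + |c j - 1| ≤ ∑ j', (|c j'| + |c j' - 1|) :=
      Finset.single_le_sum (f := fun j' => |c j'| + |c j' - 1|)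
        (fun j' _ => by positivity) (Finset.mem_univ j)
    have := abs_nonneg (c j - 1)
    rw [hAdef]; linarith
  have hA2 : ∀ j, |c j - 1| ≤ A := by
    intro j
    have h1 : |c j| + |c j - 1| ≤ ∑ j', (|c j'| + |c j' - 1|) :=
      Finset.single_le_sum (f := fun j' => |c j'| + |c j' - 1|)
        (fun j' _ => by positivity) (Finset.mem_univ j)
    have := abs_nonneg (c j)
    rw [hAdef]; linarith
  have hA0 : (0:ℝ) ≤ A := le_trans (abs_nonneg (c ⟨0, hs⟩)) (hA1 ⟨0, hs⟩)
  refine ⟨M1' * A ^ (s + 2) / ((s + 1)! : ℝ) * (1 + SPa)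
    + M1' * A ^ (s + 1) / (s ! : ℝ) * SRa
    + M2' * A ^ (s + 1) / (s ! : ℝ) * (SQa + SRha + SRa), ?_⟩
  intro m F0 F1 u a b hab hu hg hderiv hM1 hM2 Δt hΔt n hn0 hnj i
  have hI : UniqueDiffOn ℝ (Set.Icc a b) := uniqueDiffOn_Icc hab
  set t0 : ℝ := (n : ℝ) * Δt with ht0def
  have ht0 : t0 ∈ Set.Icc a b := hn0
  have hYm : ∀ j : Fin s, t0 - Δt + c j * Δt ∈ Set.Icc a b := fun j => (hnj j).1
  have hXm : ∀ j : Fin s, t0 + c j * Δt ∈ Set.Icc a b := fun j => (hnj j).2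
  have hAΔ : (0:ℝ) ≤ A * Δt := mul_nonneg hA0 hΔt.le
  have hfp1 : (0:ℝ) < (((s + 1))! : ℝ) := by positivity
  have hfp2 : (0:ℝ) < ((s)! : ℝ) := by positivity
  -- smoothness
  have hu' : ContDiffOn ℝ (((s + 1 : ℕ) : ℕ∞) + 1) u (Set.Icc a b) := by
    refine hu.of_le (le_of_eq ?_)
    push_cast
    rw [add_assoc, one_add_one_eq_two]
  have hw : ContDiffOn ℝ ((s : ℕ∞) + 1) (derivWithin u (Set.Icc a b)) (Set.Icc a b) :=
    hu.derivWithin hI (le_of_eq (by rw [add_assoc, one_add_one_eq_two]))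
  -- derivative bounds
  have hM1u : ∀ y ∈ Set.Icc a b,
      ‖iteratedDerivWithin (s + 1 + 1) u (Set.Icc a b) y‖ ≤ M1' :=
    fun y hy => le_trans (hM1 y hy) (le_max_left _ _)
  have hM1w : ∀ y ∈ Set.Icc a b,
      ‖iteratedDerivWithin (s + 1) (derivWithin u (Set.Icc a b)) (Set.Icc a b) y‖ ≤ M1' := by
    intro y hy
    rw [← iteratedDerivWithin_succ']
    exact le_trans (hM1 y hy) (le_max_left _ _)
  have hM2g : ∀ y ∈ Set.Icc a b,
      ‖iteratedDerivWithin (s + 1) (fun t => F0 (u t)) (Set.Icc a b) y‖ ≤ M2' :=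
    fun y hy => le_trans (hM2 y hy) (le_max_left _ _)
  have hF1e : ∀ t ∈ Set.Icc a b,
      F1 (u t) = derivWithin u (Set.Icc a b) t - F0 (u t) := by
    intro t ht
    rw [(hderiv t ht).derivWithin (hI t ht)]
    abel
  -- Taylor remainder bounds
  have hTB1y : ∀ j : Fin s, ‖u (t0 - Δt + c j * Δt) - ∑ k ∈ Finset.range (s + 2), ((k ! : ℝ)⁻¹ * ((c j - 1) * Δt) ^ k) • iteratedDerivWithin k u (Set.Icc a b) t0‖ ≤ M1' * (A * Δt) ^ (s + 2) / ((s + 1)! : ℝ) := by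
    intro j
    have h := imex_taylor_two_sided (n := s + 1) hab hu' (hYm j) ht0 hM1u
    rw [taylor_within_apply] at h
    have e : t0 - Δt + c j * Δt - t0 = (c j - 1) * Δt := by ring
    rw [e] at h
    refine le_trans h ?_
    have habs : |(c j - 1) * Δt| ≤ A * Δt := by
      rw [abs_mul, abs_of_pos hΔt]
      exact mul_le_mul_of_nonneg_right (hA2 j) hΔt.le
    exact (div_le_div_iff_of_pos_right hfp1).2 (mul_le_mul_of_nonneg_left
      (pow_le_pow_left₀ (abs_nonneg _) habs _) hM1'0)
  have hTB1x : ∀ j : Fin s, ‖u (t0 + c j * Δt) - ∑ k ∈ Finset.range (s + 2),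
      ((k ! : ℝ)⁻¹ * (c j * Δt) ^ k) • iteratedDerivWithin k u (Set.Icc a b) t0‖ ≤ M1' * (A * Δt) ^ (s + 2) / ((s + 1)! : ℝ) := by
    intro j
    have h := imex_taylor_two_sided (n := s + 1) hab hu' (hXm j) ht0 hM1u
    rw [taylor_within_apply] at h
    have e : t0 + c j * Δt - t0 = c j * Δt := by ring
    rw [e] at h
    refine le_trans h ?_
    have habs : |c j * Δt| ≤ A * Δt := by
      rw [abs_mul, abs_of_pos hΔt]
      exact mul_le_mul_of_nonneg_right (hA1 j) hΔt.le
    exact (div_le_div_iff_of_pos_right hfp1).2 (mul_le_mul_of_nonneg_left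
      (pow_le_pow_left₀ (abs_nonneg _) habs _) hM1'0)
  have hTB2x : ∀ j : Fin s, ‖derivWithin u (Set.Icc a b) (t0 + c j * Δt) - ∑ k ∈ Finset.range (s + 1), ((k ! : ℝ)⁻¹ * (c j * Δt) ^ k) • iteratedDerivWithin (k + 1) u (Set.Icc a b) t0‖ ≤ M1' * (A * Δt) ^ (s + 1) / (s ! : ℝ) := by
    intro j
    have h := imex_taylor_two_sided (n := s) hab hw (hXm j) ht0 hM1w
    rw [taylor_within_apply] at h
    have e : t0 + c j * Δt - t0 = c j * Δt := by ring
    rw [e] at h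
    have hsc : ∑ k ∈ Finset.range (s + 1), ((k ! : ℝ)⁻¹ * (c j * Δt) ^ k) •
        iteratedDerivWithin k (derivWithin u (Set.Icc a b)) (Set.Icc a b) t0
        = ∑ k ∈ Finset.range (s + 1), ((k ! : ℝ)⁻¹ * (c j * Δt) ^ k) • iteratedDerivWithin (k + 1) u (Set.Icc a b) t0 :=
      Finset.sum_congr rfl fun k _ => by rw [iteratedDerivWithin_succ']
    rw [hsc] at h
    refine le_trans h ?_
    have habs : |c j * Δt| ≤ A * Δt := by
      rw [abs_mul, abs_of_pos hΔt]
      exact mul_le_mul_of_nonneg_right (hA1 j) hΔt.le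
    exact (div_le_div_iff_of_pos_right hfp2).2 (mul_le_mul_of_nonneg_left
      (pow_le_pow_left₀ (abs_nonneg _) habs _) hM1'0)
  have hTB3y : ∀ j : Fin s, ‖F0 (u (t0 - Δt + c j * Δt)) - ∑ k ∈ Finset.range (s + 1), ((k ! : ℝ)⁻¹ * ((c j - 1) * Δt) ^ k) • iteratedDerivWithin k (fun t => F0 (u t)) (Set.Icc a b) t0‖ ≤ M2' * (A * Δt) ^ (s + 1) / (s ! : ℝ) := by
    intro j
    have h := imex_taylor_two_sided (n := s) hab hg (hYm j) ht0 hM2g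
    rw [taylor_within_apply] at h
    have e : t0 - Δt + c j * Δt - t0 = (c j - 1) * Δt := by ring
    rw [e] at h
    refine le_trans h ?_
    have habs : |(c j - 1) * Δt| ≤ A * Δt := by
      rw [abs_mul, abs_of_pos hΔt]
      exact mul_le_mul_of_nonneg_right (hA2 j) hΔt.le
    exact (div_le_div_iff_of_pos_right hfp2).2 (mul_le_mul_of_nonneg_left
      (pow_le_pow_left₀ (abs_nonneg _) habs _) hM2'0)
  have hTB3x : ∀ j : Fin s, ‖F0 (u (t0 + c j * Δt)) - ∑ k ∈ Finset.range (s + 1), ((k ! : ℝ)⁻¹ * (c j * Δt) ^ k) • iteratedDerivWithin k (fun t => F0 (u t)) (Set.Icc a b) t0‖ ≤ M2' * (A * Δt) ^ (s + 1) / (s ! : ℝ) := by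
    intro j
    have h := imex_taylor_two_sided (n := s) hab hg (hXm j) ht0 hM2g
    rw [taylor_within_apply] at h
    have e : t0 + c j * Δt - t0 = c j * Δt := by ring
    rw [e] at h
    refine le_trans h ?_
    have habs : |c j * Δt| ≤ A * Δt := by
      rw [abs_mul, abs_of_pos hΔt]
      exact mul_le_mul_of_nonneg_right (hA1 j) hΔt.le
    exact (div_le_div_iff_of_pos_right hfp2).2 (mul_le_mul_of_nonneg_left
      (pow_le_pow_left₀ (abs_nonneg _) habs _) hM2'0)
  -- atoms
  set TUci : EuclideanSpace ℝ (Fin m) := ∑ k ∈ Finset.range (s + 2), ((k ! : ℝ)⁻¹ * (c i * Δt) ^ k) • iteratedDerivWithin k u (Set.Icc a b) t0 with hTUci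
  set RUxi : EuclideanSpace ℝ (Fin m) := u (t0 + c i * Δt) - TUci with hRUxi
  set SPT : EuclideanSpace ℝ (Fin m) := ∑ k ∈ Finset.range (s + 2), (∑ j, P i j * ((k ! : ℝ)⁻¹ * ((c j - 1) * Δt) ^ k)) • iteratedDerivWithin k u (Set.Icc a b) t0 with hSPT
  set S1' : EuclideanSpace ℝ (Fin m) := ∑ j, P i j • (u (t0 - Δt + c j * Δt) - ∑ k ∈ Finset.range (s + 2), ((k ! : ℝ)⁻¹ * ((c j - 1) * Δt) ^ k) • iteratedDerivWithin k u (Set.Icc a b) t0) with hS1'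
  set SQT : EuclideanSpace ℝ (Fin m) := ∑ k ∈ Finset.range (s + 1), (∑ j, Qh i j * ((k ! : ℝ)⁻¹ * ((c j - 1) * Δt) ^ k)) • iteratedDerivWithin k (fun t => F0 (u t)) (Set.Icc a b) t0 with hSQT
  set S2' : EuclideanSpace ℝ (Fin m) := ∑ j, Qh i j • (F0 (u (t0 - Δt + c j * Δt)) - ∑ k ∈ Finset.range (s + 1), ((k ! : ℝ)⁻¹ * ((c j - 1) * Δt) ^ k) • iteratedDerivWithin k (fun t => F0 (u t)) (Set.Icc a b) t0) with hS2'
  set SRhT : EuclideanSpace ℝ (Fin m) := ∑ k ∈ Finset.range (s + 1), (∑ j, Rh i j * ((k ! : ℝ)⁻¹ * (c j * Δt) ^ k)) • iteratedDerivWithin k (fun t => F0 (u t)) (Set.Icc a b) t0 with hSRhT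
  set S3' : EuclideanSpace ℝ (Fin m) := ∑ j, Rh i j • (F0 (u (t0 + c j * Δt)) - ∑ k ∈ Finset.range (s + 1), ((k ! : ℝ)⁻¹ * (c j * Δt) ^ k) • iteratedDerivWithin k (fun t => F0 (u t)) (Set.Icc a b) t0) with hS3'
  set SRWT : EuclideanSpace ℝ (Fin m) := ∑ k ∈ Finset.range (s + 1), (∑ j, R i j * ((k ! : ℝ)⁻¹ * (c j * Δt) ^ k)) • iteratedDerivWithin (k + 1) u (Set.Icc a b) t0 with hSRWT
  set S4' : EuclideanSpace ℝ (Fin m) := ∑ j, R i j • (derivWithin u (Set.Icc a b) (t0 + c j * Δt) - ∑ k ∈ Finset.range (s + 1), ((k ! : ℝ)⁻¹ * (c j * Δt) ^ k) • iteratedDerivWithin (k + 1) u (Set.Icc a b) t0) with hS4'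
  set SRGT : EuclideanSpace ℝ (Fin m) := ∑ k ∈ Finset.range (s + 1), (∑ j, R i j * ((k ! : ℝ)⁻¹ * (c j * Δt) ^ k)) • iteratedDerivWithin k (fun t => F0 (u t)) (Set.Icc a b) t0 with hSRGT
  set S5' : EuclideanSpace ℝ (Fin m) := ∑ j, R i j • (F0 (u (t0 + c j * Δt)) - ∑ k ∈ Finset.range (s + 1), ((k ! : ℝ)⁻¹ * (c j * Δt) ^ k) • iteratedDerivWithin k (fun t => F0 (u t)) (Set.Icc a b) t0) with hS5'
  -- splitting identities
  have e0 : u (t0 + c i * Δt) = TUci + RUxi := by rw [hRUxi]; abel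
  have hcol1 : ∑ j, P i j • (∑ k ∈ Finset.range (s + 2),
      ((k ! : ℝ)⁻¹ * ((c j - 1) * Δt) ^ k) • iteratedDerivWithin k u (Set.Icc a b) t0) = SPT := by
    rw [hSPT]
    exact imex_collect (s + 2) (fun j => P i j)
      (fun j k => (k ! : ℝ)⁻¹ * ((c j - 1) * Δt) ^ k) (fun k => iteratedDerivWithin k u (Set.Icc a b) t0)
  have hsum1 : ∑ j, P i j • u (t0 - Δt + c j * Δt) = SPT + S1' := by
    rw [← hcol1, hS1', ← Finset.sum_add_distrib]
    exact Finset.sum_congr rfl fun j _ => by rw [← smul_add]; congr 1; abel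
  have hcol2 : ∑ j, Qh i j • (∑ k ∈ Finset.range (s + 1),
      ((k ! : ℝ)⁻¹ * ((c j - 1) * Δt) ^ k) • iteratedDerivWithin k (fun t => F0 (u t)) (Set.Icc a b) t0) = SQT := by
    rw [hSQT]
    exact imex_collect (s + 1) (fun j => Qh i j)
      (fun j k => (k ! : ℝ)⁻¹ * ((c j - 1) * Δt) ^ k) (fun k => iteratedDerivWithin k (fun t => F0 (u t)) (Set.Icc a b) t0)
  have hsum2 : ∑ j, Qh i j • F0 (u (t0 - Δt + c j * Δt)) = SQT + S2' := by
    rw [← hcol2, hS2', ← Finset.sum_add_distrib]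
    exact Finset.sum_congr rfl fun j _ => by rw [← smul_add]; congr 1; abel
  have hcol3 : ∑ j, Rh i j • (∑ k ∈ Finset.range (s + 1),
      ((k ! : ℝ)⁻¹ * (c j * Δt) ^ k) • iteratedDerivWithin k (fun t => F0 (u t)) (Set.Icc a b) t0) = SRhT := by
    rw [hSRhT]
    exact imex_collect (s + 1) (fun j => Rh i j)
      (fun j k => (k ! : ℝ)⁻¹ * (c j * Δt) ^ k) (fun k => iteratedDerivWithin k (fun t => F0 (u t)) (Set.Icc a b) t0)
  have hsum3 : ∑ j, Rh i j • F0 (u (t0 + c j * Δt)) = SRhT + S3' := by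
    rw [← hcol3, hS3', ← Finset.sum_add_distrib]
    exact Finset.sum_congr rfl fun j _ => by rw [← smul_add]; congr 1; abel
  have hcol4 : ∑ j, R i j • (∑ k ∈ Finset.range (s + 1),
      ((k ! : ℝ)⁻¹ * (c j * Δt) ^ k) • iteratedDerivWithin (k + 1) u (Set.Icc a b) t0) = SRWT := by
    rw [hSRWT]
    exact imex_collect (s + 1) (fun j => R i j)
      (fun j k => (k ! : ℝ)⁻¹ * (c j * Δt) ^ k) (fun k => iteratedDerivWithin (k + 1) u (Set.Icc a b) t0)
  have hw4 : ∑ j, R i j • derivWithin u (Set.Icc a b) (t0 + c j * Δt) = SRWT + S4' := by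
    rw [← hcol4, hS4', ← Finset.sum_add_distrib]
    exact Finset.sum_congr rfl fun j _ => by rw [← smul_add]; congr 1; abel
  have hcol5 : ∑ j, R i j • (∑ k ∈ Finset.range (s + 1),
      ((k ! : ℝ)⁻¹ * (c j * Δt) ^ k) • iteratedDerivWithin k (fun t => F0 (u t)) (Set.Icc a b) t0) = SRGT := by
    rw [hSRGT]
    exact imex_collect (s + 1) (fun j => R i j)
      (fun j k => (k ! : ℝ)⁻¹ * (c j * Δt) ^ k) (fun k => iteratedDerivWithin k (fun t => F0 (u t)) (Set.Icc a b) t0)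
  have hg5 : ∑ j, R i j • F0 (u (t0 + c j * Δt)) = SRGT + S5' := by
    rw [← hcol5, hS5', ← Finset.sum_add_distrib]
    exact Finset.sum_congr rfl fun j _ => by rw [← smul_add]; congr 1; abel
  have hsum4 : ∑ j, R i j • F1 (u (t0 + c j * Δt)) = (SRWT + S4') - (SRGT + S5') := by
    rw [← hw4, ← hg5, ← Finset.sum_sub_distrib]
    exact Finset.sum_congr rfl fun j _ => by rw [hF1e _ (hXm j), smul_sub]
  -- main cancellation identity 1 (u-part)
  have h1 : TUci - SPT - Δt • SRWT - Δt ^ (s + 1) • (d i • iteratedDerivWithin (s + 1) u (Set.Icc a b) t0) = 0 := by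
    rw [hTUci, hSPT, hSRWT, ← Finset.sum_sub_distrib, Finset.smul_sum]
    simp_rw [← sub_smul, smul_smul]
    refine imex_sum_shift s
      (fun k => (k ! : ℝ)⁻¹ * (c i * Δt) ^ k - ∑ j, P i j * ((k ! : ℝ)⁻¹ * ((c j - 1) * Δt) ^ k))
      (fun k => Δt * ∑ j, R i j * ((k ! : ℝ)⁻¹ * (c j * Δt) ^ k))
      (Δt ^ (s + 1) * d i)
      (fun k => iteratedDerivWithin k u (Set.Icc a b) t0)
      (by simp [hPe i]) ?_ ?_
    · intro k hk
      beta_reduce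
      have facP : ∑ j, P i j * (((k + 1)! : ℝ)⁻¹ * ((c j - 1) * Δt) ^ (k + 1))
          = ((k + 1)! : ℝ)⁻¹ * Δt ^ (k + 1) * ∑ j, P i j * (c j - 1) ^ (k + 1) := by
        rw [Finset.mul_sum]; exact Finset.sum_congr rfl fun j _ => by rw [mul_pow]; ring
      have facR : ∑ j, R i j * ((k ! : ℝ)⁻¹ * (c j * Δt) ^ k)
          = (k ! : ℝ)⁻¹ * Δt ^ k * ∑ j, R i j * c j ^ k := by
        rw [Finset.mul_sum]; exact Finset.sum_congr rfl fun j _ => by rw [mul_pow]; ring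
      rw [facP, facR, mul_pow]
      have h' : c i ^ (k + 1) - (∑ j, P i j * (c j - 1) ^ (k + 1))
          - (∑ j, R i j * c j ^ k) * ((k : ℝ) + 1) = 0 := by
        linear_combination hcond i k hk
      linear_combination imex_coeff_mid k (c i ^ (k + 1))
        (∑ j, P i j * (c j - 1) ^ (k + 1)) (∑ j, R i j * c j ^ k) Δt h'
    · beta_reduce
      have facP : ∑ j, P i j * (((s + 1)! : ℝ)⁻¹ * ((c j - 1) * Δt) ^ (s + 1))
          = ((s + 1)! : ℝ)⁻¹ * Δt ^ (s + 1) * ∑ j, P i j * (c j - 1) ^ (s + 1) := by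
        rw [Finset.mul_sum]; exact Finset.sum_congr rfl fun j _ => by rw [mul_pow]; ring
      have facR : ∑ j, R i j * ((s ! : ℝ)⁻¹ * (c j * Δt) ^ s)
          = (s ! : ℝ)⁻¹ * Δt ^ s * ∑ j, R i j * c j ^ s := by
        rw [Finset.mul_sum]; exact Finset.sum_congr rfl fun j _ => by rw [mul_pow]; ring
      rw [facP, facR, mul_pow]
      linear_combination imex_coeff_last s (c i ^ (s + 1))
        (∑ j, P i j * (c j - 1) ^ (s + 1)) (∑ j, R i j * c j ^ s) Δt (d i) (hd i)
  -- main cancellation identity 2 (g-part)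
  have hLgen : ∀ k : ℕ, (∑ j, Qh i j * (c j - 1) ^ k) + (∑ j, Rh i j * c j ^ k)
      - (∑ j, R i j * c j ^ k)
      = ∑ l, R i l * ((∑ j, S1 l j * (c j - 1) ^ k) + (∑ j, S2 l j * c j ^ k) - c l ^ k) := by
    intro k
    have t1 : ∑ j, Qh i j * (c j - 1) ^ k = ∑ l, R i l * ∑ j, S1 l j * (c j - 1) ^ k := by
      simp_rw [hQE, Finset.sum_mul]
      rw [Finset.sum_comm]
      simp_rw [Finset.mul_sum, mul_assoc]
    have t2 : ∑ j, Rh i j * c j ^ k = ∑ l, R i l * ∑ j, S2 l j * c j ^ k := by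
      simp_rw [hRhE, Finset.sum_mul]
      rw [Finset.sum_comm]
      simp_rw [Finset.mul_sum, mul_assoc]
    rw [t1, t2]
    simp_rw [mul_sub, mul_add]
    rw [Finset.sum_sub_distrib, Finset.sum_add_distrib]
  have hL0 : ∀ k : ℕ, k < s → (∑ j, Qh i j * (c j - 1) ^ k) + (∑ j, Rh i j * c j ^ k)
      - (∑ j, R i j * c j ^ k) = 0 := by
    intro k hk
    rw [hLgen k]
    exact Finset.sum_eq_zero fun l _ => by rw [hSV l k hk]; ring
  have hLs : (∑ j, Qh i j * (c j - 1) ^ s) + (∑ j, Rh i j * c j ^ s)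
      - (∑ j, R i j * c j ^ s)
      = - ∑ j, R i j * ((c j ^ s - ∑ k, S2 j k * c k ^ s) - ∑ k, S1 j k * (c k - 1) ^ s) := by
    rw [hLgen s, ← Finset.sum_neg_distrib]
    exact Finset.sum_congr rfl fun l _ => by ring
  have h2 : Δt • SRGT - Δt • SQT - Δt • SRhT - (Δt • ∑ j, R i j • ((Δt ^ s / (Nat.factorial s : ℝ)) • (((c j ^ s - ∑ k, S2 j k * c k ^ s) - ∑ k, S1 j k * (c k - 1) ^ s) • iteratedDerivWithin s (fun t => F0 (u t)) (Set.Icc a b) t0))) = 0 := by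
    have hET : (Δt • ∑ j, R i j • ((Δt ^ s / (Nat.factorial s : ℝ)) • (((c j ^ s - ∑ k, S2 j k * c k ^ s) - ∑ k, S1 j k * (c k - 1) ^ s) • iteratedDerivWithin s (fun t => F0 (u t)) (Set.Icc a b) t0))) = (Δt * (Δt ^ s / (Nat.factorial s : ℝ))
        * ∑ j, R i j * ((c j ^ s - ∑ k, S2 j k * c k ^ s) - ∑ k, S1 j k * (c k - 1) ^ s)) • iteratedDerivWithin s (fun t => F0 (u t)) (Set.Icc a b) t0 := by
      rw [Finset.smul_sum]
      simp_rw [smul_smul]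
      rw [← Finset.sum_smul]
      congr 1
      rw [Finset.mul_sum]
      exact Finset.sum_congr rfl fun j _ => by ring
    have hz : ∀ k : ℕ, k < s →
        Δt * ∑ j, R i j * ((k ! : ℝ)⁻¹ * (c j * Δt) ^ k)
          - Δt * ∑ j, Qh i j * ((k ! : ℝ)⁻¹ * ((c j - 1) * Δt) ^ k)
          - Δt * ∑ j, Rh i j * ((k ! : ℝ)⁻¹ * (c j * Δt) ^ k) = 0 := by
      intro k hk
      have facQ : ∑ j, Qh i j * ((k ! : ℝ)⁻¹ * ((c j - 1) * Δt) ^ k)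
          = (k ! : ℝ)⁻¹ * Δt ^ k * ∑ j, Qh i j * (c j - 1) ^ k := by
        rw [Finset.mul_sum]; exact Finset.sum_congr rfl fun j _ => by rw [mul_pow]; ring
      have facRh : ∑ j, Rh i j * ((k ! : ℝ)⁻¹ * (c j * Δt) ^ k)
          = (k ! : ℝ)⁻¹ * Δt ^ k * ∑ j, Rh i j * c j ^ k := by
        rw [Finset.mul_sum]; exact Finset.sum_congr rfl fun j _ => by rw [mul_pow]; ring
      have facR : ∑ j, R i j * ((k ! : ℝ)⁻¹ * (c j * Δt) ^ k)
          = (k ! : ℝ)⁻¹ * Δt ^ k * ∑ j, R i j * c j ^ k := by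
        rw [Finset.mul_sum]; exact Finset.sum_congr rfl fun j _ => by rw [mul_pow]; ring
      rw [facQ, facRh, facR]
      linear_combination (-(Δt * ((k ! : ℝ)⁻¹ * Δt ^ k))) * hL0 k hk
    have hzs : Δt * ∑ j, R i j * ((s ! : ℝ)⁻¹ * (c j * Δt) ^ s)
          - Δt * ∑ j, Qh i j * ((s ! : ℝ)⁻¹ * ((c j - 1) * Δt) ^ s)
          - Δt * ∑ j, Rh i j * ((s ! : ℝ)⁻¹ * (c j * Δt) ^ s)
          - Δt * (Δt ^ s / (Nat.factorial s : ℝ)) * ∑ j, R i j * ((c j ^ s - ∑ k, S2 j k * c k ^ s) - ∑ k, S1 j k * (c k - 1) ^ s) = 0 := by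
      have facQ : ∑ j, Qh i j * ((s ! : ℝ)⁻¹ * ((c j - 1) * Δt) ^ s)
          = (s ! : ℝ)⁻¹ * Δt ^ s * ∑ j, Qh i j * (c j - 1) ^ s := by
        rw [Finset.mul_sum]; exact Finset.sum_congr rfl fun j _ => by rw [mul_pow]; ring
      have facRh : ∑ j, Rh i j * ((s ! : ℝ)⁻¹ * (c j * Δt) ^ s)
          = (s ! : ℝ)⁻¹ * Δt ^ s * ∑ j, Rh i j * c j ^ s := by
        rw [Finset.mul_sum]; exact Finset.sum_congr rfl fun j _ => by rw [mul_pow]; ring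
      have facR : ∑ j, R i j * ((s ! : ℝ)⁻¹ * (c j * Δt) ^ s)
          = (s ! : ℝ)⁻¹ * Δt ^ s * ∑ j, R i j * c j ^ s := by
        rw [Finset.mul_sum]; exact Finset.sum_congr rfl fun j _ => by rw [mul_pow]; ring
      rw [facQ, facRh, facR]
      linear_combination (-(Δt * ((s ! : ℝ)⁻¹ * Δt ^ s))) * hLs
    rw [hET, hSQT, hSRhT, hSRGT, Finset.smul_sum, Finset.smul_sum, Finset.smul_sum]
    simp_rw [smul_smul]
    rw [← Finset.sum_sub_distrib, ← Finset.sum_sub_distrib]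
    simp_rw [← sub_smul]
    rw [Finset.sum_range_succ]
    rw [Finset.sum_eq_zero (fun k hk => by
      rw [hz k (Finset.mem_range.1 hk), zero_smul]), zero_add, ← sub_smul, hzs, zero_smul]
  -- norm bounds for the remainders
  have hT1 : (0:ℝ) ≤ M1' * (A * Δt) ^ (s + 2) / ((s + 1)! : ℝ) := by positivity
  have hT2 : (0:ℝ) ≤ M1' * (A * Δt) ^ (s + 1) / (s ! : ℝ) := by positivity
  have hT3 : (0:ℝ) ≤ M2' * (A * Δt) ^ (s + 1) / (s ! : ℝ) := by positivity
  have hb1 : ‖RUxi‖ ≤ M1' * (A * Δt) ^ (s + 2) / ((s + 1)! : ℝ) := by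
    rw [hRUxi, hTUci]; exact hTB1x i
  have hPai : ∑ j, |P i j| ≤ SPa := by
    rw [hSPadef]
    exact Finset.single_le_sum (f := fun i' => ∑ j, |P i' j|)
      (fun i' _ => Finset.sum_nonneg fun j _ => abs_nonneg _) (Finset.mem_univ i)
  have hQai : ∑ j, |Qh i j| ≤ SQa := by
    rw [hSQadef]
    exact Finset.single_le_sum (f := fun i' => ∑ j, |Qh i' j|)
      (fun i' _ => Finset.sum_nonneg fun j _ => abs_nonneg _) (Finset.mem_univ i)
  have hRhai : ∑ j, |Rh i j| ≤ SRha := by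
    rw [hSRhadef]
    exact Finset.single_le_sum (f := fun i' => ∑ j, |Rh i' j|)
      (fun i' _ => Finset.sum_nonneg fun j _ => abs_nonneg _) (Finset.mem_univ i)
  have hRai : ∑ j, |R i j| ≤ SRa := by
    rw [hSRadef]
    exact Finset.single_le_sum (f := fun i' => ∑ j, |R i' j|)
      (fun i' _ => Finset.sum_nonneg fun j _ => abs_nonneg _) (Finset.mem_univ i)
  have hb2 : ‖S1'‖ ≤ SPa * (M1' * (A * Δt) ^ (s + 2) / ((s + 1)! : ℝ)) := by
    rw [hS1']; exact imex_sum_norm_bound _ _ _ _ hTB1y hT1 hPai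
  have hb3 : ‖S2'‖ ≤ SQa * (M2' * (A * Δt) ^ (s + 1) / (s ! : ℝ)) := by
    rw [hS2']; exact imex_sum_norm_bound _ _ _ _ hTB3y hT3 hQai
  have hb4 : ‖S3'‖ ≤ SRha * (M2' * (A * Δt) ^ (s + 1) / (s ! : ℝ)) := by
    rw [hS3']; exact imex_sum_norm_bound _ _ _ _ hTB3x hT3 hRhai
  have hb5 : ‖S4'‖ ≤ SRa * (M1' * (A * Δt) ^ (s + 1) / (s ! : ℝ)) := by
    rw [hS4']; exact imex_sum_norm_bound _ _ _ _ hTB2x hT2 hRai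
  have hb6 : ‖S5'‖ ≤ SRa * (M2' * (A * Δt) ^ (s + 1) / (s ! : ℝ)) := by
    rw [hS5']; exact imex_sum_norm_bound _ _ _ _ hTB3x hT3 hRai
  have hfinal : ‖RUxi - S1' - Δt • S2' - Δt • S3' - Δt • S4' + Δt • S5'‖
      ≤ (M1' * A ^ (s + 2) / ((s + 1)! : ℝ) * (1 + SPa)
        + M1' * A ^ (s + 1) / (s ! : ℝ) * SRa
        + M2' * A ^ (s + 1) / (s ! : ℝ) * (SQa + SRha + SRa)) * Δt ^ (s + 2) := by
    have step1 := imex_norm6 RUxi S1' (Δt • S2') (Δt • S3') (Δt • S4') (Δt • S5')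
    have hsm : ∀ v : EuclideanSpace ℝ (Fin m), ‖Δt • v‖ = Δt * ‖v‖ := by
      intro v; rw [norm_smul, Real.norm_eq_abs, abs_of_pos hΔt]
    rw [hsm S2', hsm S3', hsm S4', hsm S5'] at step1
    have m3 : Δt * ‖S2'‖ ≤ Δt * (SQa * (M2' * (A * Δt) ^ (s + 1) / (s ! : ℝ))) := mul_le_mul_of_nonneg_left hb3 hΔt.le
    have m4 : Δt * ‖S3'‖ ≤ Δt * (SRha * (M2' * (A * Δt) ^ (s + 1) / (s ! : ℝ))) := mul_le_mul_of_nonneg_left hb4 hΔt.le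
    have m5 : Δt * ‖S4'‖ ≤ Δt * (SRa * (M1' * (A * Δt) ^ (s + 1) / (s ! : ℝ))) := mul_le_mul_of_nonneg_left hb5 hΔt.le
    have m6 : Δt * ‖S5'‖ ≤ Δt * (SRa * (M2' * (A * Δt) ^ (s + 1) / (s ! : ℝ))) := mul_le_mul_of_nonneg_left hb6 hΔt.le
    have hsum : ‖RUxi - S1' - Δt • S2' - Δt • S3' - Δt • S4' + Δt • S5'‖
        ≤ (M1' * (A * Δt) ^ (s + 2) / ((s + 1)! : ℝ)) + SPa * (M1' * (A * Δt) ^ (s + 2) / ((s + 1)! : ℝ)) + Δt * (SQa * (M2' * (A * Δt) ^ (s + 1) / (s ! : ℝ))) + Δt * (SRha * (M2' * (A * Δt) ^ (s + 1) / (s ! : ℝ)))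
          + Δt * (SRa * (M1' * (A * Δt) ^ (s + 1) / (s ! : ℝ))) + Δt * (SRa * (M2' * (A * Δt) ^ (s + 1) / (s ! : ℝ))) := by linarith
    refine hsum.trans (le_of_eq ?_)
    simp only [mul_pow]
    field_simp
    ring
  -- assemble
  rw [e0, hsum1, hsum2, hsum3, hsum4]
  refine le_trans (le_of_eq ?_) hfinal
  congr 1
  linear_combination (norm := module) h1 + h2
end

section
/- (Lemma 1) Let s ≥ 1, let a_0, a_1, …, a_s ∈ ℝ with a_0 ≠ 0 and b_1, …, b_s ∈ ℝ be given, and define the s×s matrices A_1 = (a_{s−j+i}) (upper triangular with a_s on the diagonal, entry (i,j) equal to a_{s+i−j} for j ≥ i, zero otherwise), A_2 (lower triangular with entry (i,j) equal to a_{i−j} for i ≥ j, zero otherwise), B_1 (entry (i,j) equal to b_{j−i+1} for j ≥ i−0 with B_1(i,j) = b_{j−i+1} when 1 ≤ j−i+1 ≤ s, zero otherwise, i.e. upper triangular including the diagonal), and B_2 (strictly lower triangular with entry (i,j) equal to b_{s−i+j+1} for i > j). Then A_2 is invertible, and a family of vectors u_{n−1+k/s} ∈ ℝ^m satisfies the IMEX-BDF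 recursion Σ_{i=0}^s a_i u_{n+(k−i)/s} = (Δt/s) Σ_{i=1}^s b_i F0(u_{n−1+(k+i−1)/s}) + (Δt/s) F1(u_{n+k/s}) for k = 1,…,s and all n, if and only if the stacked vectors w_n = (u_{n+1/s}, u_{n+2/s}, …, u_{n+1}) satisfy the s-stage IMEX-Peer recursion w_n = P w_{n−1} + Δt Q̂ F0(w_{n−1}) + Δt R̂ F0(w_n) + Δt R F1(w_n) with node vector c = (1/s, 2/s, …, 1)^T and coefficient matrices P = −A_2^{−1} A_1, Q̂ = (1/s) A_2^{−1} B_1, R̂ = (1/s) A_2^{−1} B_2, R = (1/s) A_2^{−1}. -/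
section MactAux
variable {s : ℕ} {E : Type*} [AddCommGroup E] [Module ℝ E]
def stmt12mact (M : Matrix (Fin s) (Fin s) ℝ) (x : Fin s → E) : Fin s → E :=
  fun i => ∑ j, M i j • x j


lemma stmt12mact_mul (M N : Matrix (Fin s) (Fin s) ℝ) (x : Fin s → E) :
    stmt12mact (M * N) x = stmt12mact M (stmt12mact N x) := by
  funext i
  simp only [stmt12mact, Matrix.mul_apply, Finset.sum_smul, Finset.smul_sum, mul_smul]
  exact Finset.sum_comm

lemma stmt12mact_one (x : Fin s → E) : stmt12mact (1 : Matrix (Fin s) (Fin s) ℝ) x = x := by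
  funext i
  simp [stmt12mact, Matrix.one_apply, ite_smul]

lemma stmt12mact_cancel {M N : Matrix (Fin s) (Fin s) ℝ} (h1 : M * N = 1) (h2 : N * M = 1)
    (x y : Fin s → E) : x = stmt12mact N y ↔ stmt12mact M x = y := by
  constructor
  · rintro rfl; rw [← stmt12mact_mul, h1, stmt12mact_one]
  · rintro rfl; rw [← stmt12mact_mul, h2, stmt12mact_one]

lemma stmt12mact_negM (M : Matrix (Fin s) (Fin s) ℝ) (x : Fin s → E) :
    stmt12mact (-M) x = -(stmt12mact M x) := by
  funext i
  simp [stmt12mact, neg_smul, Finset.sum_neg_distrib]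

lemma stmt12mact_smulM (c : ℝ) (M : Matrix (Fin s) (Fin s) ℝ) (x : Fin s → E) :
    stmt12mact (c • M) x = c • stmt12mact M x := by
  funext i
  simp [stmt12mact, Matrix.smul_apply, smul_smul, Finset.smul_sum]

lemma stmt12mact_addv (M : Matrix (Fin s) (Fin s) ℝ) (x y : Fin s → E) :
    stmt12mact M (x + y) = stmt12mact M x + stmt12mact M y := by
  funext i
  simp [stmt12mact, smul_add, Finset.sum_add_distrib]

lemma stmt12mact_subv (M : Matrix (Fin s) (Fin s) ℝ) (x y : Fin s → E) :
    stmt12mact M (x - y) = stmt12mact M x - stmt12mact M y := by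
  funext i
  simp [stmt12mact, smul_sub, Finset.sum_sub_distrib]

lemma stmt12mact_smulv (c : ℝ) (M : Matrix (Fin s) (Fin s) ℝ) (x : Fin s → E) :
    stmt12mact M (c • x) = c • stmt12mact M x := by
  funext i
  simp [stmt12mact, Finset.smul_sum, smul_comm c]

lemma stmt12fin_sum_ite {n : ℕ} {F : Type*} [AddCommMonoid F] (p : ℕ → Prop) [DecidablePred p]
    (g : ℕ → F) (t : Finset ℕ) (ht : (Finset.range n).filter p = t)
    (f : Fin n → F) (hf : ∀ j : Fin n, f j = if p (j : ℕ) then g (j : ℕ) else 0) :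
    ∑ j, f j = ∑ j ∈ t, g j := by
  rw [← ht, Finset.sum_filter]
  calc ∑ j : Fin n, f j = ∑ j : Fin n, (fun k => if p k then g k else 0) ((j : ℕ)) :=
        Finset.sum_congr rfl fun j _ => hf j
    _ = ∑ j ∈ Finset.range n, (if p j then g j else 0) := by
        exact Fin.sum_univ_eq_sum_range (fun k => if p k then g k else 0) n


end MactAux

lemma stmt12key (s m : ℕ) (a b : ℕ → ℝ)
    (A1 A2 B1 B2 P Qh Rh R : Matrix (Fin s) (Fin s) ℝ)
    (hA1 : ∀ i j : Fin s, A1 i j = if (i : ℕ) ≤ (j : ℕ) then a (s + (i : ℕ) - (j : ℕ)) else 0)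
    (hA2 : ∀ i j : Fin s, A2 i j = if (j : ℕ) ≤ (i : ℕ) then a ((i : ℕ) - (j : ℕ)) else 0)
    (hB1 : ∀ i j : Fin s, B1 i j = if (i : ℕ) ≤ (j : ℕ) then b ((j : ℕ) - (i : ℕ) + 1) else 0)
    (hB2 : ∀ i j : Fin s, B2 i j = if (j : ℕ) < (i : ℕ) then b (s + (j : ℕ) + 1 - (i : ℕ)) else 0)
    (hP : P = -(A2⁻¹ * A1))
    (hQ : Qh = ((s : ℝ))⁻¹ • (A2⁻¹ * B1))
    (hRh : Rh = ((s : ℝ))⁻¹ • (A2⁻¹ * B2))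
    (hR : R = ((s : ℝ))⁻¹ • A2⁻¹)
    (hinv1 : A2 * A2⁻¹ = 1) (hinv2 : A2⁻¹ * A2 = 1)
    (F0 F1 : EuclideanSpace ℝ (Fin m) → EuclideanSpace ℝ (Fin m))
    (Δt : ℝ) (v : ℕ → EuclideanSpace ℝ (Fin m))
    (N : ℕ) (wn wp : Fin s → EuclideanSpace ℝ (Fin m))
    (hwn : ∀ j : Fin s, wn j = v (N + s + (j : ℕ) + 1))
    (hwp : ∀ j : Fin s, wp j = v (N + (j : ℕ) + 1)) :
    ((∀ i : Fin s, (∑ d ∈ Finset.range (s + 1), a d • v (N + s + (i : ℕ) + 1 - d)) =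
        (Δt / s) • (∑ d ∈ Finset.Icc 1 s, b d • F0 (v (N + s + (i : ℕ) + 1 - s + d - 1)))
          + (Δt / s) • F1 (v (N + s + (i : ℕ) + 1))) ↔
      (∀ i : Fin s, wn i = (∑ j, P i j • wp j)
          + Δt • (∑ j, Qh i j • F0 (wp j))
          + Δt • (∑ j, Rh i j • F0 (wn j))
          + Δt • (∑ j, R i j • F1 (wn j)))) := by
  -- expansions of the matrix actions
  have eA2 : ∀ i : Fin s, stmt12mact A2 wn i
      = ∑ j ∈ Finset.range ((i : ℕ) + 1), a ((i : ℕ) - j) • v (N + s + j + 1) := by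
    intro i
    have hi := i.isLt
    simp only [stmt12mact]
    refine stmt12fin_sum_ite (fun j => j ≤ (i : ℕ)) (fun j => a ((i : ℕ) - j) • v (N + s + j + 1))
      _ ?_ _ ?_
    · ext x; simp only [Finset.mem_filter, Finset.mem_range]; omega
    · intro j; rw [hA2, hwn, ite_smul, zero_smul]
  have eA1 : ∀ i : Fin s, stmt12mact A1 wp i
      = ∑ j ∈ Finset.Ico (i : ℕ) s, a (s + (i : ℕ) - j) • v (N + j + 1) := by
    intro i
    simp only [stmt12mact]
    refine stmt12fin_sum_ite (fun j => (i : ℕ) ≤ j) (fun j => a (s + (i : ℕ) - j) • v (N + j + 1))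
      _ ?_ _ ?_
    · ext x; simp only [Finset.mem_filter, Finset.mem_range, Finset.mem_Ico]; omega
    · intro j; rw [hA1, hwp, ite_smul, zero_smul]
  have eB1 : ∀ i : Fin s, stmt12mact B1 (fun j => F0 (wp j)) i
      = ∑ j ∈ Finset.Ico (i : ℕ) s, b (j - (i : ℕ) + 1) • F0 (v (N + j + 1)) := by
    intro i
    simp only [stmt12mact]
    refine stmt12fin_sum_ite (fun j => (i : ℕ) ≤ j)
      (fun j => b (j - (i : ℕ) + 1) • F0 (v (N + j + 1))) _ ?_ _ ?_
    · ext x; simp only [Finset.mem_filter, Finset.mem_range, Finset.mem_Ico]; omega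
    · intro j; rw [hB1, hwp, ite_smul, zero_smul]
  have eB2 : ∀ i : Fin s, stmt12mact B2 (fun j => F0 (wn j)) i
      = ∑ j ∈ Finset.range (i : ℕ), b (s + j + 1 - (i : ℕ)) • F0 (v (N + s + j + 1)) := by
    intro i
    have hi := i.isLt
    simp only [stmt12mact]
    refine stmt12fin_sum_ite (fun j => j < (i : ℕ))
      (fun j => b (s + j + 1 - (i : ℕ)) • F0 (v (N + s + j + 1))) _ ?_ _ ?_
    · ext x; simp only [Finset.mem_filter, Finset.mem_range]; omega
    · intro j; rw [hB2, hwn, ite_smul, zero_smul]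
  -- claim 1
  have claim1 : ∀ i : Fin s,
      (∑ d ∈ Finset.range (s + 1), a d • v (N + s + (i : ℕ) + 1 - d))
        = stmt12mact A2 wn i + stmt12mact A1 wp i := by
    intro i
    have hi := i.isLt
    rw [eA2 i, eA1 i, Finset.range_eq_Ico,
      ← Finset.sum_Ico_consecutive (fun d => a d • v (N + s + (i : ℕ) + 1 - d))
        (show 0 ≤ (i : ℕ) + 1 by omega) (show (i : ℕ) + 1 ≤ s + 1 by omega)]
    congr 1
    · rw [← Finset.range_eq_Ico]
      refine Finset.sum_nbij' (fun d => (i : ℕ) - d) (fun j => (i : ℕ) - j) ?_ ?_ ?_ ?_ ?_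
      · intro d hd; simp only [Finset.mem_range] at *; omega
      · intro j hj; simp only [Finset.mem_range] at *; omega
      · intro d hd; simp only [Finset.mem_range] at hd; omega
      · intro j hj; simp only [Finset.mem_range] at hj; omega
      · intro d hd; simp only [Finset.mem_range] at hd
        rw [show (i : ℕ) - ((i : ℕ) - d) = d by omega,
          show N + s + ((i : ℕ) - d) + 1 = N + s + (i : ℕ) + 1 - d by omega]
    · refine Finset.sum_nbij' (fun d => s + (i : ℕ) - d) (fun j => s + (i : ℕ) - j) ?_ ?_ ?_ ?_ ?_
      · intro d hd; simp only [Finset.mem_Ico] at *; omega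
      · intro j hj; simp only [Finset.mem_Ico] at *; omega
      · intro d hd; simp only [Finset.mem_Ico] at hd; omega
      · intro j hj; simp only [Finset.mem_Ico] at hj; omega
      · intro d hd; simp only [Finset.mem_Ico] at hd
        rw [show s + (i : ℕ) - (s + (i : ℕ) - d) = d by omega,
          show N + (s + (i : ℕ) - d) + 1 = N + s + (i : ℕ) + 1 - d by omega]
  -- claim 2
  have claim2 : ∀ i : Fin s,
      (∑ d ∈ Finset.Icc 1 s, b d • F0 (v (N + s + (i : ℕ) + 1 - s + d - 1)))
        = stmt12mact B1 (fun j => F0 (wp j)) i + stmt12mact B2 (fun j => F0 (wn j)) i := by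
    intro i
    have hi := i.isLt
    rw [eB1 i, eB2 i, show Finset.Icc 1 s = Finset.Ico 1 (s + 1) from (Finset.Ico_add_one_right_eq_Icc 1 s).symm,
      ← Finset.sum_Ico_consecutive (fun d => b d • F0 (v (N + s + (i : ℕ) + 1 - s + d - 1)))
        (show 1 ≤ s - (i : ℕ) + 1 by omega) (show s - (i : ℕ) + 1 ≤ s + 1 by omega)]
    congr 1
    · refine Finset.sum_nbij' (fun d => (i : ℕ) + d - 1) (fun j => j - (i : ℕ) + 1) ?_ ?_ ?_ ?_ ?_
      · intro d hd; simp only [Finset.mem_Ico] at *; omega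
      · intro j hj; simp only [Finset.mem_Ico] at *; omega
      · intro d hd; simp only [Finset.mem_Ico] at hd; omega
      · intro j hj; simp only [Finset.mem_Ico] at hj; omega
      · intro d hd; simp only [Finset.mem_Ico] at hd
        rw [show (i : ℕ) + d - 1 - (i : ℕ) + 1 = d by omega,
          show N + ((i : ℕ) + d - 1) + 1 = N + s + (i : ℕ) + 1 - s + d - 1 by omega]
    · refine Finset.sum_nbij' (fun d => d + (i : ℕ) - 1 - s) (fun j => s + j + 1 - (i : ℕ)) ?_ ?_ ?_ ?_ ?_
      · intro d hd; simp only [Finset.mem_Ico, Finset.mem_range] at *; omega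
      · intro j hj; simp only [Finset.mem_Ico, Finset.mem_range] at *; omega
      · intro d hd; simp only [Finset.mem_Ico] at hd; omega
      · intro j hj; simp only [Finset.mem_range] at hj; omega
      · intro d hd; simp only [Finset.mem_Ico] at hd
        rw [show s + (d + (i : ℕ) - 1 - s) + 1 - (i : ℕ) = d by omega,
          show N + s + (d + (i : ℕ) - 1 - s) + 1 = N + s + (i : ℕ) + 1 - s + d - 1 by omega]
  -- package the right-hand side
  set Z : Fin s → EuclideanSpace ℝ (Fin m) :=
    (Δt / (s : ℝ)) • (stmt12mact B1 (fun j => F0 (wp j)) + stmt12mact B2 (fun j => F0 (wn j))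
      + (fun j => F1 (wn j))) - stmt12mact A1 wp with hZdef
  have hZi : ∀ i : Fin s, Z i
      = ((Δt / (s : ℝ)) • (stmt12mact B1 (fun j => F0 (wp j)) i
            + stmt12mact B2 (fun j => F0 (wn j)) i)
          + (Δt / (s : ℝ)) • F1 (wn i)) - stmt12mact A1 wp i := by
    intro i
    rw [hZdef]
    simp only [Pi.sub_apply, Pi.smul_apply, Pi.add_apply]
    rw [smul_add]
  have hfun : stmt12mact P wp + Δt • stmt12mact Qh (fun j => F0 (wp j))
      + Δt • stmt12mact Rh (fun j => F0 (wn j)) + Δt • stmt12mact R (fun j => F1 (wn j))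
      = stmt12mact A2⁻¹ Z := by
    rw [hZdef, hP, hQ, hRh, hR,
      stmt12mact_subv, stmt12mact_smulv, stmt12mact_addv, stmt12mact_addv,
      ← stmt12mact_mul, ← stmt12mact_mul, ← stmt12mact_mul,
      stmt12mact_negM, stmt12mact_smulM, stmt12mact_smulM, stmt12mact_smulM,
      div_eq_mul_inv]
    simp only [smul_smul, smul_add]
    abel
  have perI : ∀ i : Fin s,
      ((∑ d ∈ Finset.range (s + 1), a d • v (N + s + (i : ℕ) + 1 - d)) =
        (Δt / s) • (∑ d ∈ Finset.Icc 1 s, b d • F0 (v (N + s + (i : ℕ) + 1 - s + d - 1)))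
          + (Δt / s) • F1 (v (N + s + (i : ℕ) + 1))
       ↔ stmt12mact A2 wn i = Z i) := by
    intro i
    rw [claim1 i, claim2 i, ← hwn i, hZi i, eq_sub_iff_add_eq]
  refine Iff.trans (forall_congr' perI) ?_
  refine Iff.trans funext_iff.symm ?_
  refine Iff.trans (stmt12mact_cancel hinv1 hinv2 wn Z).symm ?_
  refine Iff.trans funext_iff ?_
  refine forall_congr' fun i => ?_
  rw [← hfun]
  exact Iff.rfl


open Finset

/-- Lemma 1: The `s`-step IMEX-BDF method with `s` sub-steps of length
`Δt/s` is equivalent to an `s`-stage IMEX-Peer method with coefficient matrices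
`P = -A2⁻¹ A1`, `Q̂ = (1/s) A2⁻¹ B1`, `R̂ = (1/s) A2⁻¹ B2`, `R = (1/s) A2⁻¹`; in
particular `A2` is invertible. Here `v ℓ = u_{ℓ/s}` denotes the family of sub-step
approximations and `w n i = v (n s + i + 1)` the stacked Peer stage vectors. -/
theorem stmt_12 (s m : ℕ) (hs : 1 ≤ s)
    (a b : ℕ → ℝ) (ha0 : a 0 ≠ 0)
    (A1 A2 B1 B2 P Qh Rh R : Matrix (Fin s) (Fin s) ℝ)
    (hA1 : ∀ i j : Fin s, A1 i j = if (i : ℕ) ≤ (j : ℕ) then a (s + (i : ℕ) - (j : ℕ)) else 0)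
    (hA2 : ∀ i j : Fin s, A2 i j = if (j : ℕ) ≤ (i : ℕ) then a ((i : ℕ) - (j : ℕ)) else 0)
    (hB1 : ∀ i j : Fin s, B1 i j = if (i : ℕ) ≤ (j : ℕ) then b ((j : ℕ) - (i : ℕ) + 1) else 0)
    (hB2 : ∀ i j : Fin s, B2 i j = if (j : ℕ) < (i : ℕ) then b (s + (j : ℕ) + 1 - (i : ℕ)) else 0)
    (hP : P = -(A2⁻¹ * A1))
    (hQ : Qh = ((s : ℝ))⁻¹ • (A2⁻¹ * B1))
    (hRh : Rh = ((s : ℝ))⁻¹ • (A2⁻¹ * B2))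
    (hR : R = ((s : ℝ))⁻¹ • A2⁻¹)
    (F0 F1 : EuclideanSpace ℝ (Fin m) → EuclideanSpace ℝ (Fin m))
    (Δt : ℝ) (hΔt : 0 < Δt)
    (v : ℕ → EuclideanSpace ℝ (Fin m))
    (w : ℕ → Fin s → EuclideanSpace ℝ (Fin m))
    (hw : ∀ (n : ℕ) (i : Fin s), w n i = v (n * s + i + 1)) :
    IsUnit A2 ∧
      ((∀ ℓ : ℕ, s + 1 ≤ ℓ →
          (∑ i ∈ Finset.range (s + 1), a i • v (ℓ - i)) =
            (Δt / s) • (∑ i ∈ Finset.Icc 1 s, b i • F0 (v (ℓ - s + i - 1)))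
              + (Δt / s) • F1 (v ℓ)) ↔
        (∀ n : ℕ, 1 ≤ n → ∀ i : Fin s,
          w n i = (∑ j, P i j • w (n - 1) j)
            + Δt • (∑ j, Qh i j • F0 (w (n - 1) j))
            + Δt • (∑ j, Rh i j • F0 (w n j))
            + Δt • (∑ j, R i j • F1 (w n j)))) := by
  have hdet : A2.det = a 0 ^ s := by
    have ht : A2.BlockTriangular OrderDual.toDual := by
      intro i j hij
      have h2 : (i : ℕ) < (j : ℕ) := hij
      rw [hA2, if_neg (by omega)]
    rw [Matrix.det_of_lowerTriangular A2 ht,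
      Finset.prod_congr rfl (fun i _ => (by rw [hA2]; simp : A2 i i = a 0))]
    simp
  have hdu : IsUnit A2.det := by
    rw [hdet]; exact (isUnit_iff_ne_zero.mpr ha0).pow s
  have hA2u : IsUnit A2 := (Matrix.isUnit_iff_isUnit_det A2).mpr hdu
  have hinv1 : A2 * A2⁻¹ = 1 := Matrix.mul_nonsing_inv A2 hdu
  have hinv2 : A2⁻¹ * A2 = 1 := Matrix.nonsing_inv_mul A2 hdu
  refine ⟨hA2u, ?_⟩
  constructor
  · intro hB n hn i
    obtain ⟨n', rfl⟩ : ∃ n', n = n' + 1 := ⟨n - 1, by omega⟩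
    exact (stmt12key s m a b A1 A2 B1 B2 P Qh Rh R hA1 hA2 hB1 hB2 hP hQ hRh hR hinv1 hinv2
        F0 F1 Δt v (n' * s) (w (n' + 1)) (w n')
        (fun j => by rw [hw, add_one_mul]) (fun j => hw n' j)).mp
      (fun i' => hB (n' * s + s + (i' : ℕ) + 1) (by generalize n' * s = Q; omega)) i
  · intro hPeer ℓ hℓ
    obtain ⟨n', i0, hi0, rfl⟩ : ∃ n' i0, i0 < s ∧ ℓ = n' * s + s + i0 + 1 := by
      refine ⟨(ℓ - 1) / s - 1, (ℓ - 1) % s, Nat.mod_lt _ (by omega), ?_⟩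
      have h1 : (ℓ - 1) / s * s + (ℓ - 1) % s = ℓ - 1 := Nat.div_add_mod' (ℓ - 1) s
      have h2 : 1 ≤ (ℓ - 1) / s := (Nat.one_le_div_iff (by omega)).mpr (by omega)
      have h3 : s ≤ (ℓ - 1) / s * s := by
        calc s = 1 * s := (one_mul s).symm
          _ ≤ (ℓ - 1) / s * s := Nat.mul_le_mul_right s h2
      rw [Nat.sub_mul, one_mul]
      generalize (ℓ - 1) / s * s = Q at h1 h3 ⊢
      omega
    exact (stmt12key s m a b A1 A2 B1 B2 P Qh Rh R hA1 hA2 hB1 hB2 hP hQ hRh hR hinv1 hinv2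
        F0 F1 Δt v (n' * s) (w (n' + 1)) (w n')
        (fun j => by rw [hw, add_one_mul]) (fun j => hw n' j)).mpr
      (fun i' => hPeer (n' + 1) (by omega) i') ⟨i0, hi0⟩
end

section
/- Consider the 2-stage implicit Peer method with node vector c = (1/2, 1)^T and coefficient matrices P = [[−1/3, 4/3], [−4/9, 13/9]], R = [[1/3, 0], [4/9, 1/3]] (the BDF2 method with step size Δt/2 in Peer form). Let S2 = [[0, 0], [μ, 0]] with μ = 2, let S1 be the unique matrix with S1 V1 = (I − S2) V0 where V0 = (c_i^{j−1}) and V1 = ((c_i−1)^{j−1}), and set Q̂ = R S1, R̂ = R S2. Then the resulting IMEX-Peer method coincides with the IMEX-BDF2 method of Lemma 1: with a_0 = 3/2, a_1 = −2, a_2 = 1/2 and (b_1, b_2) = (−1, 2), one has P = −A_2^{−1} A_1, R = (1/2) A_2^{−1}, Q̂ = (1/2) A_2^{−1} B_1 and R̂ = (1/2) A_2^{−1} B_2. -/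
/-!
A direct check gives `2R A₂ = I`, so `A₂⁻¹ = 2R`, and then `P = -2R A₁` is another direct
check. The remaining identities reduce to `S₂ = B₂`, which holds by definition, and `S₁ = B₁`:
the BDF extrapolation weights `B₁` also solve `S₁ V₁ = (I - S₂) V₀`, and that solution is
unique because `V₁` is the Vandermonde matrix of the distinct nodes `cᵢ - 1`.
-/

open Matrix Function

theorem eq_of_mul_vandermonde_eq {K : Type*} [Field K] {n : ℕ} {v : Fin n → K}
    (hv : Injective v) {S T : Matrix (Fin n) (Fin n) K}
    (h : S * vandermonde v = T * vandermonde v) : S = T :=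
  have : Invertible (vandermonde v) :=
    invertibleOfIsUnitDet _ (isUnit_iff_ne_zero.mpr (det_vandermonde_ne_zero_iff.mpr hv))
  (Matrix.mul_left_inj_of_invertible _).mp h

/-- The 2-stage IMEX-Peer method obtained from the BDF2-Peer method
(`c = (1/2,1)`, given `P`, `R`) by extrapolation with `S2 = [[0,0],[μ,0]]`, `μ = 2`,
coincides with the IMEX-BDF2 method of Lemma 1 built from `a₀ = 3/2, a₁ = -2, a₂ = 1/2`
and `(b₁,b₂) = (-1,2)`. -/
theorem stmt_17
    (c : Fin 2 → ℝ) (hcv : c = ![1/2, 1])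
    (P R S2 V0 V1 S1 A1 A2 B1 B2 : Matrix (Fin 2) (Fin 2) ℝ)
    (a0 a1 a2 b1 b2 : ℝ)
    (ha0 : a0 = 3/2) (ha1 : a1 = -2) (ha2 : a2 = 1/2)
    (hb1 : b1 = -1) (hb2 : b2 = 2)
    (hP : P = !![-1/3, 4/3; -4/9, 13/9])
    (hR : R = !![1/3, 0; 4/9, 1/3])
    (hS2 : S2 = !![0, 0; 2, 0])
    (hV0 : ∀ i j, V0 i j = c i ^ (j : ℕ))
    (hV1 : ∀ i j, V1 i j = (c i - 1) ^ (j : ℕ))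
    (hS1 : S1 * V1 = (1 - S2) * V0)
    (hA1 : A1 = !![a2, a1; 0, a2])
    (hA2 : A2 = !![a0, 0; a1, a0])
    (hB1 : B1 = !![b1, b2; 0, b1])
    (hB2 : B2 = !![0, 0; b2, 0]) :
    P = -(A2⁻¹ * A1) ∧ R = (2 : ℝ)⁻¹ • A2⁻¹ ∧
      R * S1 = (2 : ℝ)⁻¹ • (A2⁻¹ * B1) ∧ R * S2 = (2 : ℝ)⁻¹ • (A2⁻¹ * B2) := by
  have hV0c : V0 = vandermonde c := Matrix.ext hV0
  have hV1c : V1 = vandermonde (fun i => c i - 1) := Matrix.ext hV1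
  have hc : Injective c := by
    subst hcv
    intro i j h
    fin_cases i <;> fin_cases j <;> first | rfl | norm_num at h
  subst hV0c hV1c
  have hS1B1 : S1 = B1 := by
    refine eq_of_mul_vandermonde_eq (sub_left_injective.comp hc) (hS1.trans ?_)
    subst hcv hS2 hB1 hb1 hb2
    ext i j
    fin_cases i <;> fin_cases j <;> norm_num [mul_apply, Fin.sum_univ_two, vandermonde_apply]
  have hA2inv : A2⁻¹ = (2 : ℝ) • R := by
    refine inv_eq_left_inv ?_
    subst hR hA2 ha0 ha1
    ext i j
    fin_cases i <;> fin_cases j <;> norm_num [mul_apply, Fin.sum_univ_two]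
  simp only [hA2inv, hS1B1, smul_mul_assoc, inv_smul_smul₀ (two_ne_zero : (2 : ℝ) ≠ 0)]
  refine ⟨?_, trivial, trivial, by rw [hS2, hB2, hb2]⟩
  subst hP hR hA1 ha1 ha2
  ext i j
  fin_cases i <;> fin_cases j <;> norm_num [mul_apply, Fin.sum_univ_two]
end
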